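/- arXiv:2206.00935 — 13 statements merged into one kernel-verified Lean document; each statement's English description precedes it below -/
import Mathlib

section
/- Let F(x) = ∫₀^∞ e^{-t}/(t+x) dt for x > 0, and define F₁(x) = 1/F(x), F_{2m}(x) = 1/(F_{2m−1}(x) − x) for m ≥ 1, and F_{2m+1}(x) = 1/(F_{2m}(x) − 1/m) for m ≥ 1. Then for every positive integer m, F_{2m−1}(x)/x → 1 and F_{2m}(x) → 1/m as x → ∞. -/
/-!
Write `S n k x = ∫₀^∞ tⁿ e^{-t} / (t + x)^k dt`, so that `F = S 0 1` and `S 0 0 = 1`.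
Splitting `1 = (t + x) / (t + x)` gives `S n k - x S n (k+1) = S (n+1) (k+1)`, and integrating
`e^{-t} (t / (t + x))^{n+1}` by parts gives `S (n+1) (n+1) = (n+1) x S n (n+2)`. With these two
identities the recursion closes up: `F_{2m+1} = S m m / S m (m+1)` and
`F_{2m+2} = S m (m+1) / S (m+1) (m+1)`. Dominated convergence gives `x^k S n k x → n!`, and both
limits follow.
-/

open Real Filter MeasureTheory Set Topology
open scoped Nat

lemma integrableOn_pow_mul_exp_neg (n : ℕ) :
    IntegrableOn (fun t : ℝ => t ^ n * exp (-t)) (Ioi 0) :=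
  (GammaIntegral_convergent (s := n + 1) (by positivity)).congr_fun
    (fun t _ => by simp [mul_comm]) measurableSet_Ioi

lemma integral_pow_mul_exp_neg (n : ℕ) : ∫ t in Ioi (0 : ℝ), t ^ n * exp (-t) = n ! := by
  rw [← Gamma_nat_eq_factorial, Gamma_eq_integral (by positivity)]
  exact setIntegral_congr_fun measurableSet_Ioi fun t _ => by simp [mul_comm]

lemma tendsto_div_add_atTop (t : ℝ) : Tendsto (fun x : ℝ => x / (t + x)) atTop (𝓝 1) := by
  have h : Tendsto (fun x : ℝ => (1 + t * x⁻¹)⁻¹) atTop (𝓝 1) := by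
    simpa using ((tendsto_inv_atTop_zero.const_mul t).const_add 1).inv₀ (by simp)
  refine h.congr' ?_
  filter_upwards [eventually_gt_atTop 0] with x hx
  field_simp
  ring

noncomputable def stieltjesMoment (n k : ℕ) (x : ℝ) : ℝ :=
  ∫ t in Ioi (0 : ℝ), t ^ n * exp (-t) / (t + x) ^ k

section StieltjesMoment

variable {x : ℝ}

lemma integrableOn_stieltjesMoment (hx : 0 < x) (n k : ℕ) :
    IntegrableOn (fun t : ℝ => t ^ n * exp (-t) / (t + x) ^ k) (Ioi 0) := by
  refine ((integrableOn_pow_mul_exp_neg n).div_const (x ^ k)).mono'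
    (by fun_prop : Measurable _).aestronglyMeasurable ?_
  filter_upwards [ae_restrict_mem measurableSet_Ioi] with t (ht : 0 < t)
  rw [norm_of_nonneg (by positivity)]
  gcongr
  linarith

lemma stieltjesMoment_zero_zero : stieltjesMoment 0 0 x = 1 := by
  simp only [stieltjesMoment, pow_zero, one_mul, div_one]
  exact integral_exp_neg_Ioi_zero

lemma stieltjesMoment_sub_mul (hx : 0 < x) (n k : ℕ) :
    stieltjesMoment n k x - x * stieltjesMoment n (k + 1) x =
      stieltjesMoment (n + 1) (k + 1) x := by
  rw [stieltjesMoment, stieltjesMoment, ← integral_const_mul,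
    ← integral_sub (integrableOn_stieltjesMoment hx n k)
      ((integrableOn_stieltjesMoment hx n (k + 1)).const_mul x)]
  refine setIntegral_congr_fun measurableSet_Ioi fun t (ht : 0 < t) => ?_
  field_simp
  ring

lemma stieltjesMoment_succ_succ (hx : 0 < x) (n : ℕ) :
    stieltjesMoment (n + 1) (n + 1) x = (n + 1) * x * stieltjesMoment n (n + 2) x := by
  set g : ℝ → ℝ := fun t => (t / (t + x)) ^ (n + 1) * exp (-t)
  have hderiv : ∀ t ∈ Ioi (0 : ℝ), HasDerivAt g
      ((n + 1) * x * (t ^ n * exp (-t) / (t + x) ^ (n + 2)) -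
        t ^ (n + 1) * exp (-t) / (t + x) ^ (n + 1)) t := by
    intro t (ht : 0 < t)
    have htx : t + x ≠ 0 := by positivity
    have hquot : HasDerivAt (fun t => t / (t + x)) (x / (t + x) ^ 2) t := by
      refine ((hasDerivAt_id' t).fun_div ((hasDerivAt_id' t).add_const x) htx).congr_deriv ?_
      ring
    refine ((hquot.fun_pow (n + 1)).mul (hasDerivAt_neg t).exp).congr_deriv ?_
    rw [Nat.add_sub_cancel, div_pow, div_pow]
    push_cast
    field_simp
    ring
  have hcont : ContinuousWithinAt g (Ici 0) 0 := by
    have : (0 : ℝ) + x ≠ 0 := by linarith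
    exact ContinuousAt.continuousWithinAt (by fun_prop (disch := assumption))
  have hlim : Tendsto g atTop (𝓝 0) := by
    refine squeeze_zero' ?_ ?_ tendsto_exp_neg_atTop_nhds_zero
    all_goals filter_upwards [eventually_gt_atTop 0] with t ht
    · positivity
    · have : t / (t + x) ≤ 1 := by rw [div_le_one (by positivity)]; linarith
      exact mul_le_of_le_one_left (by positivity) (pow_le_one₀ (by positivity) this)
  have hibp := integral_Ioi_of_hasDerivAt_of_tendsto hcont hderiv
    (((integrableOn_stieltjesMoment hx n (n + 2)).const_mul _).sub
      (integrableOn_stieltjesMoment hx (n + 1) (n + 1))) hlim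
  rw [integral_sub ((integrableOn_stieltjesMoment hx n (n + 2)).const_mul _)
    (integrableOn_stieltjesMoment hx (n + 1) (n + 1)), integral_const_mul] at hibp
  simp only [g, zero_div, zero_pow n.succ_ne_zero, zero_mul, sub_zero] at hibp
  rw [stieltjesMoment, stieltjesMoment]
  linarith

lemma stieltjesMoment_diag_sub (hx : 0 < x) (n : ℕ) :
    (n + 1) * stieltjesMoment n (n + 1) x - stieltjesMoment (n + 1) (n + 1) x =
      (n + 1) * stieltjesMoment (n + 1) (n + 2) x := by
  rw [stieltjesMoment_succ_succ hx, ← stieltjesMoment_sub_mul hx]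
  ring

end StieltjesMoment

lemma tendsto_pow_mul_stieltjesMoment (n k : ℕ) :
    Tendsto (fun x => x ^ k * stieltjesMoment n k x) atTop (𝓝 (n ! : ℝ)) := by
  have hdom : Tendsto (fun x : ℝ => ∫ t in Ioi (0 : ℝ), t ^ n * exp (-t) * (x / (t + x)) ^ k)
      atTop (𝓝 (∫ t in Ioi (0 : ℝ), t ^ n * exp (-t))) := by
    refine tendsto_integral_filter_of_dominated_convergence _ ?_ ?_
      (integrableOn_pow_mul_exp_neg n) ?_
    · exact .of_forall fun x => (by fun_prop : Measurable _).aestronglyMeasurable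
    · filter_upwards [eventually_gt_atTop 0] with x hx
      filter_upwards [ae_restrict_mem measurableSet_Ioi] with t (ht : 0 < t)
      have : x / (t + x) ≤ 1 := by rw [div_le_one (by positivity)]; linarith
      rw [norm_of_nonneg (by positivity)]
      exact mul_le_of_le_one_right (by positivity) (pow_le_one₀ (by positivity) this)
    · exact .of_forall fun t => by
        simpa using ((tendsto_div_add_atTop t).pow k).const_mul (t ^ n * exp (-t))
  rw [integral_pow_mul_exp_neg] at hdom
  refine hdom.congr' ?_
  filter_upwards [eventually_gt_atTop 0] with x hx
  rw [stieltjesMoment, ← integral_const_mul]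
  refine setIntegral_congr_fun measurableSet_Ioi fun t (ht : 0 < t) => ?_
  rw [div_pow]
  field_simp

lemma eventually_stieltjesMoment_pos (n k : ℕ) : ∀ᶠ x in atTop, 0 < stieltjesMoment n k x := by
  filter_upwards [(tendsto_pow_mul_stieltjesMoment n k).eventually
    (eventually_gt_nhds (by positivity)), eventually_gt_atTop 0] with x h hx
  exact pos_of_mul_pos_right h (by positivity)

section ContinuedFraction

variable {G : ℕ → ℝ → ℝ} {x : ℝ}

lemma even_eq_of_odd_eq
    (hGeven : ∀ m : ℕ, 1 ≤ m → ∀ x : ℝ, G (2 * m) x = 1 / (G (2 * m - 1) x - x))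
    (hx : 0 < x) {j : ℕ} (hb : stieltjesMoment j (j + 1) x ≠ 0)
    (hodd : G (2 * j + 1) x = stieltjesMoment j j x / stieltjesMoment j (j + 1) x) :
    G (2 * j + 2) x = stieltjesMoment j (j + 1) x / stieltjesMoment (j + 1) (j + 1) x := by
  have h := hGeven (j + 1) (by omega) x
  rw [show 2 * (j + 1) - 1 = 2 * j + 1 by omega, hodd] at h
  rw [show 2 * j + 2 = 2 * (j + 1) by ring, h, div_sub' hb, one_div_div, mul_comm,
    stieltjesMoment_sub_mul hx]

lemma odd_eq_of_even_eq
    (hGodd : ∀ m : ℕ, 1 ≤ m → ∀ x : ℝ, G (2 * m + 1) x = 1 / (G (2 * m) x - 1 / (m : ℝ)))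
    (hx : 0 < x) {j : ℕ} (hc : stieltjesMoment (j + 1) (j + 1) x ≠ 0)
    (heven : G (2 * j + 2) x = stieltjesMoment j (j + 1) x / stieltjesMoment (j + 1) (j + 1) x) :
    G (2 * (j + 1) + 1) x =
      stieltjesMoment (j + 1) (j + 1) x / stieltjesMoment (j + 1) (j + 2) x := by
  have hdiff : stieltjesMoment j (j + 1) x / stieltjesMoment (j + 1) (j + 1) x - 1 / (j + 1) =
      stieltjesMoment (j + 1) (j + 2) x / stieltjesMoment (j + 1) (j + 1) x := by
    field_simp
    linarith [stieltjesMoment_diag_sub hx j]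
  rw [hGodd (j + 1) (by omega), show 2 * (j + 1) = 2 * j + 2 by ring, heven, Nat.cast_succ,
    hdiff, one_div_div]

lemma eventually_odd_eq (hG1 : ∀ᶠ x in atTop, G 1 x = stieltjesMoment 0 0 x / stieltjesMoment 0 1 x)
    (hGeven : ∀ m : ℕ, 1 ≤ m → ∀ x : ℝ, G (2 * m) x = 1 / (G (2 * m - 1) x - x))
    (hGodd : ∀ m : ℕ, 1 ≤ m → ∀ x : ℝ, G (2 * m + 1) x = 1 / (G (2 * m) x - 1 / (m : ℝ)))
    (j : ℕ) :
    ∀ᶠ x in atTop, G (2 * j + 1) x = stieltjesMoment j j x / stieltjesMoment j (j + 1) x := by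
  induction j with
  | zero => simpa using hG1
  | succ j ih =>
    filter_upwards [ih, eventually_stieltjesMoment_pos j (j + 1),
      eventually_stieltjesMoment_pos (j + 1) (j + 1), eventually_gt_atTop 0] with x hodd hb hc hx
    exact odd_eq_of_even_eq hGodd hx hc.ne' (even_eq_of_odd_eq hGeven hx hb.ne' hodd)

end ContinuedFraction

/-- With `F x = ∫₀^∞ e^{-t}/(t+x) dt`, `F₁ = 1/F`,
`F_{2m} = 1/(F_{2m-1} - x)`, `F_{2m+1} = 1/(F_{2m} - 1/m)`, one has
`F_{2m-1}(x)/x → 1` and `F_{2m}(x) → 1/m` as `x → ∞`, for every `m ≥ 1`. -/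
theorem continued_fraction_expansion_at_infinity
    (F : ℝ → ℝ)
    (hF : ∀ x : ℝ, 0 < x → F x = ∫ t in Set.Ioi (0:ℝ), Real.exp (-t) / (t + x))
    (G : ℕ → ℝ → ℝ)
    (hG1 : ∀ x : ℝ, G 1 x = 1 / F x)
    (hGeven : ∀ m : ℕ, 1 ≤ m → ∀ x : ℝ, G (2 * m) x = 1 / (G (2 * m - 1) x - x))
    (hGodd : ∀ m : ℕ, 1 ≤ m → ∀ x : ℝ, G (2 * m + 1) x = 1 / (G (2 * m) x - 1 / (m : ℝ))) :
    ∀ m : ℕ, 1 ≤ m →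
      Tendsto (fun x : ℝ => G (2 * m - 1) x / x) atTop (nhds 1) ∧
      Tendsto (fun x : ℝ => G (2 * m) x) atTop (nhds (1 / (m : ℝ))) := by
  have hG1S : ∀ᶠ x in atTop, G 1 x = stieltjesMoment 0 0 x / stieltjesMoment 0 1 x := by
    filter_upwards [eventually_gt_atTop 0] with x hx
    rw [hG1, hF x hx, stieltjesMoment_zero_zero]
    simp [stieltjesMoment]
  intro m hm
  obtain ⟨j, rfl⟩ : ∃ j, m = j + 1 := ⟨m - 1, by omega⟩
  have hodd := eventually_odd_eq hG1S hGeven hGodd j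
  rw [show 2 * (j + 1) - 1 = 2 * j + 1 by omega, show 2 * (j + 1) = 2 * j + 2 by ring]
  constructor
  · have hlim := (tendsto_pow_mul_stieltjesMoment j j).div
      (tendsto_pow_mul_stieltjesMoment j (j + 1)) (by positivity)
    rw [div_self (by positivity)] at hlim
    refine hlim.congr' ?_
    filter_upwards [hodd, eventually_gt_atTop 0] with x h hx
    rw [Pi.div_apply, h]
    field_simp
    ring
  · have hlim := (tendsto_pow_mul_stieltjesMoment j (j + 1)).div
      (tendsto_pow_mul_stieltjesMoment (j + 1) (j + 1)) (by positivity)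
    rw [Nat.factorial_succ, Nat.cast_mul, div_mul_cancel_right₀ (by positivity)] at hlim
    rw [one_div]
    refine hlim.congr' ?_
    filter_upwards [hodd, eventually_stieltjesMoment_pos j (j + 1), eventually_gt_atTop 0]
      with x h hb hx
    rw [Pi.div_apply, even_eq_of_odd_eq hGeven hx hb.ne' h]
    field_simp
end

section
/- For every integer k ≥ 2 and every integer m with 1 ≤ m ≤ k, det A^{(k−1)}_{k,m} = (−1)^{k+m} · (1/((m−1)!)²) · (1/(k−m)!) · det A^{(k−1)}. -/
/-!
Write `N = k - 1`. The vector `x_j = 1 / ((j!)² (N - j)!)` satisfies `A x = e_N`: up to the factor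
`± i! / N!`, the `i`-th entry of `A x` is the `N`-th forward difference at `0` of the degree-`i`
polynomial `j ↦ C(j + i, i)`, which Vandermonde's identity evaluates to `C(i, N) = δ_{iN}`.
So `x` is the last column of `A⁻¹`, i.e. `adj A · e_N = det A · x`, and the cofactor formula for
`adj A` turns this into the minors obtained by deleting the last row.
-/

open Matrix Finset fwdDiff Nat

theorem add_choose_eq_sum_choose_mul_choose (x i : ℕ) :
    (x + i).choose i = ∑ l ∈ range (i + 1), i.choose l * x.choose l := by
  rw [Nat.add_choose_eq, Nat.sum_antidiagonal_eq_sum_range_succ_mk]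
  refine sum_congr rfl fun l hl => ?_
  rw [choose_symm (by simpa [Nat.lt_succ_iff] using hl), mul_comm]

theorem sum_neg_one_pow_mul_choose_mul_add_choose (N i : ℕ) :
    ∑ j ∈ range (N + 1), (-1 : ℤ) ^ (N - j) * N.choose j * (j + i).choose i = i.choose N := by
  have hvandermonde : (fun x : ℕ => ((x + i).choose i : ℤ))
      = ∑ l ∈ range (i + 1), (i.choose l : ℤ) • fun x : ℕ => (x.choose l : ℤ) := by
    ext x
    simp [add_choose_eq_sum_choose_mul_choose]
  have hdiff := fwdDiff_iter_eq_sum_shift 1 (fun x : ℕ => ((x + i).choose i : ℤ)) N 0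
  simp only [zero_add, smul_eq_mul, mul_one] at hdiff
  rw [← hdiff, hvandermonde, fwdDiff_iter_finsetSum, Finset.sum_apply]
  simp only [fwdDiff_iter_const_smul, Pi.smul_apply, fwdDiff_iter_choose_zero, smul_eq_mul,
    mul_ite, mul_one, mul_zero]
  rw [sum_ite_eq]
  split_ifs with h
  · rfl
  · rw [choose_eq_zero_of_lt (by simpa [Nat.lt_succ_iff] using h)]
    simp

section FactorialSums

variable {K : Type*} [Field K] [CharZero K]

theorem neg_one_pow_mul_factorial_div_eq {N i j : ℕ} (hj : j ≤ N) :
    (-1 : K) ^ (i + j) * (i + j)! / ((j ! : K) ^ 2 * (N - j)!)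
      = (-1) ^ (i + N) * i ! / N ! * ((-1) ^ (N - j) * N.choose j * (j + i).choose i) := by
  have hsign : (-1 : K) ^ (i + j) = (-1) ^ (i + N) * (-1) ^ (N - j) := by
    rw [← pow_add, show i + N + (N - j) = i + j + 2 * (N - j) by omega, pow_add _ (i + j),
      pow_mul]
    norm_num
  have hN : (N.choose j * j ! * (N - j)! : K) = N ! := by
    exact_mod_cast choose_mul_factorial_mul_factorial hj
  have hij : ((j + i).choose i * j ! * i ! : K) = (i + j)! := by
    rw [add_comm i j]
    exact_mod_cast add_choose_mul_factorial_mul_factorial j i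
  have hchoose : (N.choose j : K) ≠ 0 := Nat.cast_ne_zero.mpr (choose_pos hj).ne'
  rw [hsign, ← hN, ← hij]
  field_simp

theorem sum_range_neg_one_pow_mul_factorial_div {N i : ℕ} (hi : i ≤ N) :
    ∑ j ∈ range (N + 1), (-1 : K) ^ (i + j) * (i + j)! / ((j ! : K) ^ 2 * (N - j)!)
      = if i = N then 1 else 0 := by
  have hkey : (∑ j ∈ range (N + 1), (-1) ^ (N - j) * N.choose j * (j + i).choose i : K)
      = i.choose N := by
    exact_mod_cast sum_neg_one_pow_mul_choose_mul_add_choose N i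
  rw [sum_congr rfl fun j hj =>
      neg_one_pow_mul_factorial_div_eq (by simpa [Nat.lt_succ_iff] using hj),
    ← mul_sum, hkey]
  split_ifs with h
  · subst h
    rw [choose_self, ← two_mul, pow_mul, neg_one_sq, one_pow, one_mul, cast_one, mul_one,
      div_self (Nat.cast_ne_zero.mpr (factorial_ne_zero i))]
  · rw [choose_eq_zero_of_lt (lt_of_le_of_ne hi h)]
    simp

end FactorialSums

namespace Matrix

variable {ι R : Type*} [Fintype ι] [DecidableEq ι] [CommRing R]

theorem adjugate_apply_of_mulVec_eq_single {A : Matrix ι ι R} {x : ι → R} {i : ι}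
    (h : A *ᵥ x = Pi.single i 1) (j : ι) : adjugate A j i = A.det * x j := by
  have h' := congrFun (congrArg (adjugate A *ᵥ ·) h) j
  rw [mulVec_mulVec, adjugate_mul, smul_mulVec, one_mulVec, mulVec_single] at h'
  simpa using h'.symm

theorem det_submatrix_succAbove_of_mulVec_eq_single {n : ℕ}
    {A : Matrix (Fin (n + 1)) (Fin (n + 1)) R} {x : Fin (n + 1) → R} {i : Fin (n + 1)}
    (h : A *ᵥ x = Pi.single i 1) (j : Fin (n + 1)) :
    (A.submatrix i.succAbove j.succAbove).det = (-1) ^ (i.1 + j.1) * A.det * x j := by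
  rw [mul_assoc, ← adjugate_apply_of_mulVec_eq_single h, adjugate_fin_succ_eq_det_submatrix,
    ← mul_assoc, ← pow_add, ← two_mul, pow_mul, neg_one_sq, one_pow, one_mul]

end Matrix

/-- The paper's `A^{(n-1)}`, with rows and columns indexed from `0` instead of `1`. -/
def signedFactorialHankel (K : Type*) [Ring K] (n : ℕ) : Matrix (Fin n) (Fin n) K :=
  of fun i j => (-1) ^ (i.1 + j.1) * (i.1 + j.1)!

theorem signedFactorialHankel_mulVec (K : Type*) [Field K] [CharZero K] (N : ℕ) :
    signedFactorialHankel K (N + 1) *ᵥ (fun j => 1 / ((j.1 ! : K) ^ 2 * (N - j.1)!))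
      = Pi.single (Fin.last N) 1 := by
  ext i
  simp only [mulVec, dotProduct, signedFactorialHankel, of_apply, mul_one_div]
  rw [Fin.sum_univ_eq_sum_range
      (fun j => (-1) ^ (i.1 + j) * ((i.1 + j)! : K) / ((j ! : K) ^ 2 * (N - j)!)),
    sum_range_neg_one_pow_mul_factorial_div (Nat.lt_succ_iff.mp i.isLt)]
  simp [Pi.single_apply, Fin.ext_iff]

/-- For `k = n + 2 ≥ 2` (rows/columns indexed `1, …, k` in the paper,
`0, …, k-1` here, so the `(i,j)` entry is `(-1)^{i+j} (i+j)!`) and `1 ≤ m ≤ k`: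
`det A^{(k-1)}_{k,m} = (-1)^{k+m} (1/((m-1)!)²) (1/(k-m)!) det A^{(k-1)}`,
where `A^{(k-1)}_{k,m}` deletes the `k`-th (last) row and the `m`-th column. -/
theorem det_minor_last_row
    (n : ℕ) (m : ℕ) (hm1 : 1 ≤ m) (hm2 : m ≤ n + 2) :
    letI A : Matrix (Fin (n + 2)) (Fin (n + 2)) ℝ :=
      fun i j => (-1 : ℝ) ^ (i.1 + j.1) * ((i.1 + j.1).factorial : ℝ)
    (A.submatrix (Fin.last (n + 1)).succAbove
        (⟨m - 1, by omega⟩ : Fin (n + 2)).succAbove).det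
      = (-1 : ℝ) ^ ((n + 2) + m) * (1 / ((m - 1).factorial : ℝ) ^ 2)
          * (1 / (((n + 2) - m).factorial : ℝ)) * A.det := by
  change ((signedFactorialHankel ℝ (n + 2)).submatrix _ _).det
    = _ * (signedFactorialHankel ℝ (n + 2)).det
  rw [det_submatrix_succAbove_of_mulVec_eq_single (signedFactorialHankel_mulVec ℝ (n + 1))]
  have hsign : (-1 : ℝ) ^ (n + 2 + m) = (-1) ^ (n + 1 + (m - 1)) := by
    rw [show n + 2 + m = n + 1 + (m - 1) + 2 by omega, pow_add, neg_one_sq, mul_one]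
  rw [Fin.val_last, hsign, show n + 1 - (m - 1) = n + 2 - m by omega]
  ring
end

section
/- For every integer n ≥ 1, Q_{2n−1}(x) = Σ_{k=0}^{n−1} (C(n, k+1)/k!) x^{k+1} and Q_{2n}(x) = Σ_{k=0}^{n} (C(n, k)/k!) x^{k}. -/
open Polynomial Finset

/-!
Both closed forms satisfy the two steps of the recurrence, `Q_{2n+1} = x Q_{2n} + Q_{2n-1}` and
`Q_{2n+2} = Q_{2n+1}/(n+1) + Q_{2n}`, and agree with `Q_{-1} = 0`, `Q_0 = 1` at `n = 0`.
Coefficientwise, the odd step is Pascal's rule and the even step is Pascal's rule combined with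
`(k+1) C(n+1, k+1) = (n+1) C(n, k)`.
-/

noncomputable def closedFormOdd (n : ℕ) : ℚ[X] :=
  ∑ k ∈ range n, C ((n.choose (k + 1) : ℚ) / (k.factorial : ℚ)) * X ^ (k + 1)

noncomputable def closedFormEven (n : ℕ) : ℚ[X] :=
  ∑ k ∈ range (n + 1), C ((n.choose k : ℚ) / (k.factorial : ℚ)) * X ^ k

@[simp]
lemma closedFormOdd_zero : closedFormOdd 0 = 0 := by
  simp [closedFormOdd]

@[simp]
lemma closedFormEven_zero : closedFormEven 0 = 1 := by
  simp [closedFormEven]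

lemma closedFormOdd_eq_sum_range_succ (n : ℕ) :
    closedFormOdd n =
      ∑ k ∈ range (n + 1), C ((n.choose (k + 1) : ℚ) / (k.factorial : ℚ)) * X ^ (k + 1) := by
  simp [closedFormOdd, sum_range_succ]

lemma closedFormEven_eq_one_add (n : ℕ) :
    closedFormEven n =
      1 + ∑ k ∈ range n, C ((n.choose (k + 1) : ℚ) / ((k + 1).factorial : ℚ)) * X ^ (k + 1) := by
  rw [closedFormEven, sum_range_succ', add_comm]
  simp

lemma closedFormOdd_succ (n : ℕ) :
    closedFormOdd (n + 1) = X * closedFormEven n + closedFormOdd n := by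
  rw [closedFormOdd, closedFormEven, closedFormOdd_eq_sum_range_succ, mul_sum, ← sum_add_distrib]
  refine sum_congr rfl fun k _ => ?_
  rw [Nat.choose_succ_succ, Nat.cast_add, add_div, C_add]
  ring

lemma choose_succ_div_factorial_succ (n k : ℕ) :
    ((n + 1).choose (k + 1) : ℚ) / ((k + 1).factorial : ℚ) =
      (n + 1 : ℚ)⁻¹ * (((n + 1).choose (k + 1) : ℚ) / (k.factorial : ℚ)) +
        (n.choose (k + 1) : ℚ) / ((k + 1).factorial : ℚ) := by
  have absorb : ((n + 1).choose (k + 1) * (k + 1) : ℚ) = (n + 1) * n.choose k := by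
    exact_mod_cast (Nat.add_one_mul_choose_eq n k).symm
  have pascal : ((n + 1).choose (k + 1) : ℚ) = n.choose k + n.choose (k + 1) := by
    exact_mod_cast Nat.choose_succ_succ n k
  rw [Nat.factorial_succ]
  push_cast
  field_simp
  linear_combination ((n : ℚ) + 1) * pascal - absorb

lemma closedFormEven_succ (n : ℕ) :
    closedFormEven (n + 1) =
      C ((n + 1 : ℚ)⁻¹) * closedFormOdd (n + 1) + closedFormEven n := by
  have extend :
      ∑ k ∈ range n, C ((n.choose (k + 1) : ℚ) / ((k + 1).factorial : ℚ)) * X ^ (k + 1) =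
        ∑ k ∈ range (n + 1), C ((n.choose (k + 1) : ℚ) / ((k + 1).factorial : ℚ)) * X ^ (k + 1) := by
    simp [sum_range_succ]
  rw [closedFormEven_eq_one_add, closedFormEven_eq_one_add n, extend, closedFormOdd, mul_sum,
    add_left_comm, ← sum_add_distrib]
  congr 1
  refine sum_congr rfl fun k _ => ?_
  rw [choose_succ_div_factorial_succ, C_add, C_mul]
  ring

theorem Q_explicit_general
    (Q : ℤ → Polynomial ℚ) (m : ℤ → Polynomial ℚ)
    (hm : ∀ n : ℤ, m n = if Odd n then (X : Polynomial ℚ) else C (2 / (n : ℚ)))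
    (hQm1 : Q (-1) = 0) (hQ0 : Q 0 = 1)
    (hQ : ∀ n : ℤ, 1 ≤ n → Q n = m n * Q (n - 1) + Q (n - 2)) :
    ∀ n : ℕ, 1 ≤ n →
      Q (2 * (n : ℤ) - 1)
          = ∑ k ∈ Finset.range n, C ((n.choose (k + 1) : ℚ) / (k.factorial : ℚ)) * X ^ (k + 1) ∧
      Q (2 * (n : ℤ))
          = ∑ k ∈ Finset.range (n + 1), C ((n.choose k : ℚ) / (k.factorial : ℚ)) * X ^ k := by
  have hm_odd (n : ℕ) : m (2 * n + 1) = X := by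
    rw [hm, if_pos (odd_two_mul_add_one _)]
  have hm_even (n : ℕ) : m (2 * n + 2) = C ((n + 1 : ℚ)⁻¹) := by
    rw [hm, if_neg (by rw [Int.not_odd_iff_even]; exact ⟨n + 1, by ring⟩)]
    congr 1
    push_cast
    field_simp
  suffices closedForm : ∀ n : ℕ, Q (2 * n - 1) = closedFormOdd n ∧ Q (2 * n) = closedFormEven n from
    fun n _ => closedForm n
  intro n
  induction n with
  | zero => simpa using ⟨hQm1, hQ0⟩
  | succ n ih =>
    have odd_step : Q (2 * n + 1) = closedFormOdd (n + 1) := by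
      rw [hQ _ (by omega), add_sub_cancel_right, show (2 * n + 1 : ℤ) - 2 = 2 * n - 1 by ring,
        hm_odd, ih.1, ih.2, closedFormOdd_succ]
    have even_step : Q (2 * n + 2) = closedFormEven (n + 1) := by
      rw [hQ _ (by omega), show (2 * n + 2 : ℤ) - 1 = 2 * n + 1 by ring, add_sub_cancel_right,
        hm_even, odd_step, ih.2, closedFormEven_succ]
    push_cast
    rw [mul_add_one, show (2 * n + 2 - 1 : ℤ) = 2 * n + 1 by ring]
    exact ⟨odd_step, even_step⟩

/-- With `Pₙ/Qₙ` the truncations of the continued fraction with partial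
denominators `mₙ = x` (`n` odd), `mₙ = 2/n` (`n` even):
`Q_{2n-1}(x) = ∑_{k=0}^{n-1} (C(n,k+1)/k!) x^{k+1}` and
`Q_{2n}(x) = ∑_{k=0}^{n} (C(n,k)/k!) x^{k}` for every `n ≥ 1`. -/
theorem Q_explicit
    (P Q : ℤ → Polynomial ℚ) (m : ℤ → Polynomial ℚ)
    (hm : ∀ n : ℤ, m n = if Odd n then (X : Polynomial ℚ) else C (2 / (n : ℚ)))
    (hPm1 : P (-1) = 1) (hQm1 : Q (-1) = 0) (hP0 : P 0 = 0) (hQ0 : Q 0 = 1)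
    (hP : ∀ n : ℤ, 1 ≤ n → P n = m n * P (n - 1) + P (n - 2))
    (hQ : ∀ n : ℤ, 1 ≤ n → Q n = m n * Q (n - 1) + Q (n - 2)) :
    ∀ n : ℕ, 1 ≤ n →
      Q (2 * (n : ℤ) - 1)
          = ∑ k ∈ Finset.range n, C ((n.choose (k + 1) : ℚ) / (k.factorial : ℚ)) * X ^ (k + 1) ∧
      Q (2 * (n : ℤ))
          = ∑ k ∈ Finset.range (n + 1), C ((n.choose k : ℚ) / (k.factorial : ℚ)) * X ^ k :=
  Q_explicit_general Q m hm hQm1 hQ0 hQ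
end

section
/- For every integer n ≥ 1, P_{2n−1}(x) = Σ_{k=0}^{n−1} Σ_{l=0}^{n−k−1} (C(n, l+k+1) · l!/(l+k)!) (−1)^{l} x^{k} and P_{2n}(x) = Σ_{k=0}^{n−1} Σ_{l=0}^{n−k−1} (C(n, l+k+1) · l!/(l+k+1)!) (−1)^{l} x^{k}. -/
open Polynomial Finset
open scoped Nat

/-!
The numerators satisfy `P_{2n+1} = x P_{2n} + P_{2n-1}` and `P_{2n+2} = P_{2n+1}/(n+1) + P_{2n}`.
Once the inner sums over `l` are extended to a common range (the added terms vanish with the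
binomial coefficient), the first recurrence becomes Pascal's rule termwise and the second one
Pascal's rule combined with `(n+1) C(n,j) = (j+1) C(n+1,j+1)`; the constant term of `P_{2n-1}`
is `1` by the vanishing of the alternating binomial sum.
-/

def oddCoeff (n k : ℕ) : ℚ :=
  ∑ l ∈ range (n - k), (n.choose (l + k + 1) : ℚ) * (l ! : ℚ) / ((l + k)! : ℚ) * (-1 : ℚ) ^ l

def evenCoeff (n k : ℕ) : ℚ :=
  ∑ l ∈ range (n - k), (n.choose (l + k + 1) : ℚ) * (l ! : ℚ) / ((l + k + 1)! : ℚ) * (-1 : ℚ) ^ l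

lemma sum_range_sub_eq_sum_range {f : ℕ → ℚ} {n k N : ℕ} (hN : n - k ≤ N)
    (hf : ∀ l, n < l + k + 1 → f l = 0) : ∑ l ∈ range (n - k), f l = ∑ l ∈ range N, f l :=
  sum_subset (range_subset_range.2 hN) fun l _ hl ↦ hf l (by simp at hl; omega)

lemma oddCoeff_eq_sum_range {n k N : ℕ} (hN : n - k ≤ N) :
    oddCoeff n k = ∑ l ∈ range N,
      (n.choose (l + k + 1) : ℚ) * (l ! : ℚ) / ((l + k)! : ℚ) * (-1 : ℚ) ^ l :=
  sum_range_sub_eq_sum_range hN fun l hl ↦ by simp [Nat.choose_eq_zero_of_lt hl]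

lemma evenCoeff_eq_sum_range {n k N : ℕ} (hN : n - k ≤ N) :
    evenCoeff n k = ∑ l ∈ range N,
      (n.choose (l + k + 1) : ℚ) * (l ! : ℚ) / ((l + k + 1)! : ℚ) * (-1 : ℚ) ^ l :=
  sum_range_sub_eq_sum_range hN fun l hl ↦ by simp [Nat.choose_eq_zero_of_lt hl]

lemma oddCoeff_of_le {n k : ℕ} (h : n ≤ k) : oddCoeff n k = 0 := by
  simp [oddCoeff, Nat.sub_eq_zero_of_le h]

lemma evenCoeff_of_le {n k : ℕ} (h : n ≤ k) : evenCoeff n k = 0 := by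
  simp [evenCoeff, Nat.sub_eq_zero_of_le h]

lemma oddCoeff_zero {n : ℕ} (hn : n ≠ 0) : oddCoeff n 0 = 1 := by
  obtain ⟨n, rfl⟩ := Nat.exists_eq_succ_of_ne_zero hn
  have h : ∑ j ∈ range (n + 2), (-1 : ℚ) ^ j * ((n + 1).choose j : ℚ) = 0 := by
    exact_mod_cast Int.alternating_sum_range_choose_of_ne (n := n + 1) (by omega)
  rw [sum_range_succ'] at h
  simp only [pow_succ, mul_neg_one, neg_mul, sum_neg_distrib, pow_zero,
    Nat.choose_zero_right] at h
  have hsum : oddCoeff (n + 1) 0 =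
      ∑ l ∈ range (n + 1), (-1 : ℚ) ^ l * ((n + 1).choose (l + 1) : ℚ) := by
    simp only [oddCoeff, Nat.sub_zero, add_zero]
    refine sum_congr rfl fun l _ ↦ ?_
    field_simp
  rw [hsum]
  push_cast at h
  linarith

lemma oddCoeff_succ_succ (n k : ℕ) :
    oddCoeff (n + 1) (k + 1) = oddCoeff n (k + 1) + evenCoeff n k := by
  rw [oddCoeff_eq_sum_range (N := n - k) (by omega), oddCoeff_eq_sum_range (N := n - k) (by omega),
    evenCoeff_eq_sum_range le_rfl, ← sum_add_distrib]
  refine sum_congr rfl fun l _ ↦ ?_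
  simp only [← add_assoc, Nat.choose_succ_succ' n (l + k + 1)]
  push_cast
  ring

lemma evenCoeff_succ (n k : ℕ) :
    evenCoeff (n + 1) k = oddCoeff (n + 1) k / (n + 1) + evenCoeff n k := by
  rw [evenCoeff_eq_sum_range le_rfl, oddCoeff_eq_sum_range le_rfl,
    evenCoeff_eq_sum_range (N := n + 1 - k) (by omega), sum_div, ← sum_add_distrib]
  refine sum_congr rfl fun l _ ↦ ?_
  have hmul : ((n + 1).choose (l + k + 1) : ℚ) * (l + k + 1) = (n + 1) * n.choose (l + k) := by
    exact_mod_cast (Nat.add_one_mul_choose_eq n (l + k)).symm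
  have hpascal : ((n + 1).choose (l + k + 1) : ℚ) = n.choose (l + k) + n.choose (l + k + 1) := by
    exact_mod_cast Nat.choose_succ_succ' n (l + k)
  rw [Nat.factorial_succ]
  push_cast
  field_simp
  linear_combination ((n : ℚ) + 1) * hpascal - hmul

lemma coeff_sum_range_C_mul_X_pow {R : Type*} [Semiring R] {c : ℕ → R} {n : ℕ}
    (hc : ∀ k, n ≤ k → c k = 0) (i : ℕ) : (∑ k ∈ range n, C (c k) * X ^ k).coeff i = c i := by
  simp only [finsetSum_coeff, coeff_C_mul_X_pow, sum_ite_eq, mem_range]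
  split_ifs with h
  · rfl
  · exact (hc i (not_lt.1 h)).symm

/-- The claimed closed forms: `oddPoly n = P_{2n-1}` and `evenPoly n = P_{2n}`. -/
noncomputable def oddPoly (n : ℕ) : ℚ[X] := ∑ k ∈ range n, C (oddCoeff n k) * X ^ k

noncomputable def evenPoly (n : ℕ) : ℚ[X] := ∑ k ∈ range n, C (evenCoeff n k) * X ^ k

lemma coeff_oddPoly (n i : ℕ) : (oddPoly n).coeff i = oddCoeff n i :=
  coeff_sum_range_C_mul_X_pow (fun _ ↦ oddCoeff_of_le) i

lemma coeff_evenPoly (n i : ℕ) : (evenPoly n).coeff i = evenCoeff n i :=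
  coeff_sum_range_C_mul_X_pow (fun _ ↦ evenCoeff_of_le) i

lemma oddPoly_succ {n : ℕ} (hn : n ≠ 0) : oddPoly (n + 1) = X * evenPoly n + oddPoly n := by
  ext (_ | i) <;>
    simp [coeff_oddPoly, coeff_evenPoly, coeff_X_mul, oddCoeff_zero, hn, oddCoeff_succ_succ,
      add_comm]

lemma evenPoly_succ (n : ℕ) :
    evenPoly (n + 1) = C ((n + 1 : ℚ)⁻¹) * oddPoly (n + 1) + evenPoly n := by
  ext i
  simp [coeff_oddPoly, coeff_evenPoly, evenCoeff_succ, div_eq_inv_mul]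

lemma oddPoly_one : oddPoly 1 = 1 := by simp [oddPoly, oddCoeff]

lemma evenPoly_one : evenPoly 1 = 1 := by simp [evenPoly, evenCoeff]

section Recurrence

variable {P m : ℤ → ℚ[X]}

lemma P_two_mul_add_one (hm : ∀ n : ℤ, m n = if Odd n then X else C (2 / (n : ℚ)))
    (hP : ∀ n : ℤ, 1 ≤ n → P n = m n * P (n - 1) + P (n - 2)) (n : ℕ) :
    P (2 * n + 1) = X * P (2 * n) + P (2 * n - 1) := by
  rw [hP _ (by omega), hm, if_pos (odd_two_mul_add_one _), add_sub_cancel_right,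
    show 2 * (n : ℤ) + 1 - 2 = 2 * n - 1 by ring]

lemma P_two_mul_add_two (hm : ∀ n : ℤ, m n = if Odd n then X else C (2 / (n : ℚ)))
    (hP : ∀ n : ℤ, 1 ≤ n → P n = m n * P (n - 1) + P (n - 2)) (n : ℕ) :
    P (2 * n + 2) = C ((n + 1 : ℚ)⁻¹) * P (2 * n + 1) + P (2 * n) := by
  have hcoeff : (2 / ((2 * n + 2 : ℤ) : ℚ)) = (n + 1 : ℚ)⁻¹ := by
    push_cast
    field_simp
  rw [hP _ (by omega), hm, if_neg (Int.not_odd_iff_even.2 ⟨n + 1, by ring⟩), hcoeff,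
    show 2 * (n : ℤ) + 2 - 1 = 2 * n + 1 by ring, add_sub_cancel_right]

lemma P_eq_oddPoly_and_evenPoly (hm : ∀ n : ℤ, m n = if Odd n then X else C (2 / (n : ℚ)))
    (hPm1 : P (-1) = 1) (hP0 : P 0 = 0)
    (hP : ∀ n : ℤ, 1 ≤ n → P n = m n * P (n - 1) + P (n - 2)) {n : ℕ} (hn : 1 ≤ n) :
    P (2 * n - 1) = oddPoly n ∧ P (2 * n) = evenPoly n := by
  induction n, hn using Nat.le_induction with
  | base =>
    have hP1 : P 1 = 1 := by simpa [hP0, hPm1] using P_two_mul_add_one hm hP 0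
    have hP2 : P 2 = 1 := by simpa [hP0, hP1] using P_two_mul_add_two hm hP 0
    exact ⟨by simpa [oddPoly_one] using hP1, by simpa [evenPoly_one] using hP2⟩
  | succ n hn ih =>
    have hodd : P (2 * n + 1) = oddPoly (n + 1) := by
      rw [P_two_mul_add_one hm hP, ih.1, ih.2, oddPoly_succ (by omega)]
    have heven : P (2 * n + 2) = evenPoly (n + 1) := by
      rw [P_two_mul_add_two hm hP, hodd, ih.2, evenPoly_succ]
    push_cast
    exact ⟨by rwa [show 2 * ((n : ℤ) + 1) - 1 = 2 * n + 1 by ring],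
      by rwa [show 2 * ((n : ℤ) + 1) = 2 * n + 2 by ring]⟩

end Recurrence

theorem P_explicit_general
    (P : ℤ → Polynomial ℚ) (m : ℤ → Polynomial ℚ)
    (hm : ∀ n : ℤ, m n = if Odd n then (X : Polynomial ℚ) else C (2 / (n : ℚ)))
    (hPm1 : P (-1) = 1) (hP0 : P 0 = 0)
    (hP : ∀ n : ℤ, 1 ≤ n → P n = m n * P (n - 1) + P (n - 2)) :
    ∀ n : ℕ, 1 ≤ n →
      P (2 * (n : ℤ) - 1)
          = ∑ k ∈ Finset.range n, ∑ l ∈ Finset.range (n - k),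
              C ((n.choose (l + k + 1) : ℚ) * (l.factorial : ℚ) / ((l + k).factorial : ℚ)
                  * (-1 : ℚ) ^ l) * X ^ k ∧
      P (2 * (n : ℤ))
          = ∑ k ∈ Finset.range n, ∑ l ∈ Finset.range (n - k),
              C ((n.choose (l + k + 1) : ℚ) * (l.factorial : ℚ) / ((l + k + 1).factorial : ℚ)
                  * (-1 : ℚ) ^ l) * X ^ k := by
  intro n hn
  simpa only [oddPoly, oddCoeff, evenPoly, evenCoeff, map_sum, sum_mul] using
    P_eq_oddPoly_and_evenPoly hm hPm1 hP0 hP hn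

/-- With `Pₙ/Qₙ` the truncations of the continued fraction with partial
denominators `mₙ = x` (`n` odd), `mₙ = 2/n` (`n` even):
`P_{2n-1}(x) = ∑_{k=0}^{n-1} ∑_{l=0}^{n-k-1} (C(n,l+k+1)·l!/(l+k)!) (-1)^l x^k` and
`P_{2n}(x) = ∑_{k=0}^{n-1} ∑_{l=0}^{n-k-1} (C(n,l+k+1)·l!/(l+k+1)!) (-1)^l x^k` for `n ≥ 1`. -/
theorem P_explicit
    (P Q : ℤ → Polynomial ℚ) (m : ℤ → Polynomial ℚ)
    (hm : ∀ n : ℤ, m n = if Odd n then (X : Polynomial ℚ) else C (2 / (n : ℚ)))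
    (hPm1 : P (-1) = 1) (hQm1 : Q (-1) = 0) (hP0 : P 0 = 0) (hQ0 : Q 0 = 1)
    (hP : ∀ n : ℤ, 1 ≤ n → P n = m n * P (n - 1) + P (n - 2))
    (hQ : ∀ n : ℤ, 1 ≤ n → Q n = m n * Q (n - 1) + Q (n - 2)) :
    ∀ n : ℕ, 1 ≤ n →
      P (2 * (n : ℤ) - 1)
          = ∑ k ∈ Finset.range n, ∑ l ∈ Finset.range (n - k),
              C ((n.choose (l + k + 1) : ℚ) * (l.factorial : ℚ) / ((l + k).factorial : ℚ)
                  * (-1 : ℚ) ^ l) * X ^ k ∧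
      P (2 * (n : ℤ))
          = ∑ k ∈ Finset.range n, ∑ l ∈ Finset.range (n - k),
              C ((n.choose (l + k + 1) : ℚ) * (l.factorial : ℚ) / ((l + k + 1).factorial : ℚ)
                  * (-1 : ℚ) ^ l) * X ^ k :=
  P_explicit_general P m hm hPm1 hP0 hP
end

section
/- For every real x > 0, the exponential integral satisfies E₁(x) = ∫_x^∞ e^{-t}/t dt = −log x − γ + Σ_{n=1}^∞ (−1)^{n−1} x^{n}/(n · n!), where γ is the Euler–Mascheroni constant. -/
/-!
Since `Γ'(1) = -γ`, differentiating the Gamma integral gives `∫₀^∞ e^{-t} log t dt = -γ`.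
Split this integral at `x` and integrate by parts on both pieces, taking `-e^{-t}` as the
antiderivative of `e^{-t}` on `(x, ∞)` and `1 - e^{-t}` on `(0, x)`, so that both boundary terms
at the singular endpoints vanish. This yields
`-γ = log x - ∫₀^x (1 - e^{-t})/t dt + E₁(x)`, and integrating the power series of
`(1 - e^{-t})/t` term by term gives the series.
-/

open Real MeasureTheory Set Filter Topology
open scoped Nat Interval

theorem integral_exp_neg_mul_log_eq_neg_eulerMascheroni :
    ∫ t in Ioi (0 : ℝ), exp (-t) * log t = -eulerMascheroniConstant := by
  have hGamma : HasDerivAt Complex.Gamma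
      (∫ t : ℝ in Ioi 0, (t : ℂ) ^ ((1 : ℂ) - 1) * (log t * exp (-t))) 1 := by
    refine (Complex.hasDerivAt_GammaIntegral (by simp)).congr_of_eventuallyEq ?_
    filter_upwards [(isOpen_lt continuous_const Complex.continuous_re).mem_nhds
      (by simp : (0 : ℝ) < (1 : ℂ).re)] with s hs using Complex.Gamma_eq_integral hs
  have hcast : ∫ t : ℝ in Ioi 0, (t : ℂ) ^ ((1 : ℂ) - 1) * (log t * exp (-t))
      = ((∫ t in Ioi (0 : ℝ), exp (-t) * log t : ℝ) : ℂ) := by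
    rw [← integral_complex_ofReal]
    refine setIntegral_congr_fun measurableSet_Ioi fun t _ => ?_
    simp [mul_comm]
  exact_mod_cast hcast ▸ hGamma.unique Complex.hasDerivAt_Gamma_one

theorem integrableOn_exp_neg_mul_log : IntegrableOn (fun t => exp (-t) * log t) (Ioi 0) := by
  rw [← Ioc_union_Ioi_eq_Ioi zero_le_one]
  refine IntegrableOn.union ?_ ?_
  · refine intervalIntegral.intervalIntegrable_log'.1.bdd_mul (c := 1)
      (continuous_exp.comp continuous_neg).aestronglyMeasurable ?_
    filter_upwards [ae_restrict_mem measurableSet_Ioc] with t ht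
    simpa [abs_of_pos (exp_pos _)] using ht.1.le
  · refine ((GammaIntegral_convergent (s := 2) (by norm_num)).mono_set
      (Ioi_subset_Ioi zero_le_one)).mono' ?_ ?_
    · exact ((continuous_exp.comp continuous_neg).continuousOn.mul
        (continuousOn_log.mono fun t (ht : 1 < t) => (zero_lt_one.trans ht).ne')
        ).aestronglyMeasurable measurableSet_Ioi
    · filter_upwards [ae_restrict_mem measurableSet_Ioi] with t (ht : 1 < t)
      rw [norm_mul, norm_of_nonneg (exp_pos _).le, norm_of_nonneg (log_nonneg ht.le),
        show (2 : ℝ) - 1 = 1 by norm_num, rpow_one]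
      gcongr
      exact log_le_self (by linarith)

theorem integrableOn_exp_neg_div_Ioi {x : ℝ} (hx : 0 < x) :
    IntegrableOn (fun t => exp (-t) / t) (Ioi x) := by
  refine ((exp_neg_integrableOn_Ioi x one_pos).mul_const x⁻¹).mono' ?_ ?_
  · exact ((continuous_exp.comp continuous_neg).continuousOn.div continuousOn_id
      fun t ht => (hx.trans ht).ne').aestronglyMeasurable measurableSet_Ioi
  · filter_upwards [ae_restrict_mem measurableSet_Ioi] with t (ht : x < t)
    rw [norm_div, norm_of_nonneg (exp_pos _).le, norm_of_nonneg (hx.trans ht).le, div_eq_mul_inv,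
      neg_one_mul]
    gcongr

theorem integral_Ioi_exp_neg_mul_log {x : ℝ} (hx : 0 < x) :
    ∫ t in Ioi x, exp (-t) * log t = exp (-x) * log x + ∫ t in Ioi x, exp (-t) / t := by
  have hlog := integrableOn_exp_neg_mul_log.mono_set (Ioi_subset_Ioi hx.le)
  have hderiv : ∀ t ∈ Ici x, HasDerivAt (fun s => -(exp (-s) * log s))
      (exp (-t) * log t - exp (-t) / t) t := fun t (ht : x ≤ t) =>
    (((hasDerivAt_neg t).exp).mul (hasDerivAt_log (hx.trans_le ht).ne')).neg.congr_deriv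
      (by field_simp; ring)
  have hlim : Tendsto (fun s => -(exp (-s) * log s)) atTop (𝓝 0) := by
    have hlog_exp : (fun s => log s * exp (-s)) =o[atTop] fun s => s * exp (-s) :=
      isLittleO_log_id_atTop.mul_isBigO (Asymptotics.isBigO_refl _ _)
    simpa [mul_comm] using (hlog_exp.trans_tendsto
      (by simpa using tendsto_pow_mul_exp_neg_atTop_nhds_zero 1)).neg
  have hibp := integral_Ioi_of_hasDerivAt_of_tendsto' hderiv
    (hlog.sub (integrableOn_exp_neg_div_Ioi hx)) hlim
  rw [integral_sub hlog (integrableOn_exp_neg_div_Ioi hx)] at hibp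
  linarith

theorem abs_one_sub_exp_neg_le {t : ℝ} (ht : 0 ≤ t) : |1 - exp (-t)| ≤ t := by
  rw [abs_of_nonneg (sub_nonneg.2 (exp_le_one_iff.2 (neg_nonpos.2 ht)))]
  linarith [one_sub_le_exp_neg t]

theorem intervalIntegrable_one_sub_exp_neg_div {x : ℝ} (hx : 0 ≤ x) :
    IntervalIntegrable (fun t => (1 - exp (-t)) / t) volume 0 x := by
  refine (intervalIntegrable_iff_integrableOn_Ioc_of_le hx).2 <|
    (integrableOn_const (C := 1) (by simp)).mono' ?_ ?_
  · exact ((continuous_const.sub (continuous_exp.comp continuous_neg)).continuousOn.div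
      continuousOn_id fun t ht => ht.1.ne').aestronglyMeasurable measurableSet_Ioc
  · filter_upwards [ae_restrict_mem measurableSet_Ioc] with t ht
    rw [norm_div, Real.norm_eq_abs, norm_of_nonneg ht.1.le, div_le_one ht.1]
    exact abs_one_sub_exp_neg_le ht.1.le

theorem intervalIntegral_exp_neg_mul_log {x : ℝ} (hx : 0 < x) :
    ∫ t in 0..x, exp (-t) * log t
      = (1 - exp (-x)) * log x - ∫ t in 0..x, (1 - exp (-t)) / t := by
  have hlog : IntervalIntegrable (fun t => exp (-t) * log t) volume 0 x :=
    (intervalIntegrable_iff_integrableOn_Ioc_of_le hx.le).2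
      (integrableOn_exp_neg_mul_log.mono_set Ioc_subset_Ioi_self)
  have hderiv {t : ℝ} (ht : 0 < t) : HasDerivAt (fun s => (1 - exp (-s)) * log s)
      (exp (-t) * log t + (1 - exp (-t)) / t) t :=
    (((hasDerivAt_neg t).exp.const_sub 1).mul (hasDerivAt_log ht.ne')).congr_deriv
      (by field_simp)
  have hzero : Tendsto (fun s => (1 - exp (-s)) * log s) (𝓝[>] 0) (𝓝 0) := by
    refine squeeze_zero_norm' ?_ (by simpa using
      (continuous_mul_log.tendsto 0).abs.mono_left nhdsWithin_le_nhds)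
    filter_upwards [self_mem_nhdsWithin] with s (hs : 0 < s)
    rw [norm_mul, Real.norm_eq_abs, Real.norm_eq_abs, abs_of_pos hs]
    exact mul_le_mul_of_nonneg_right (abs_one_sub_exp_neg_le hs.le) (abs_nonneg _)
  have hibp := intervalIntegral.integral_eq_sub_of_hasDerivAt_of_tendsto hx
    (fun t ht => hderiv ht.1) (hlog.add (intervalIntegrable_one_sub_exp_neg_div hx.le)) hzero
    ((hderiv hx).continuousAt.tendsto.mono_left nhdsWithin_le_nhds)
  rw [intervalIntegral.integral_add hlog (intervalIntegrable_one_sub_exp_neg_div hx.le)] at hibp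
  linarith

theorem hasSum_one_sub_exp_neg_div {t : ℝ} (ht : t ≠ 0) :
    HasSum (fun n : ℕ => (-1) ^ n * t ^ n / (n + 1)!) ((1 - exp (-t)) / t) := by
  have hexp : HasSum (fun n : ℕ => (-t) ^ n / n !) (exp (-t)) := by
    simpa [Real.exp_eq_exp_ℝ] using NormedSpace.expSeries_div_hasSum_exp (-t)
  have hterm (n : ℕ) : -((-t) ^ (n + 1) / (n + 1)!) / t = (-1) ^ n * t ^ n / (n + 1)! := by
    rw [pow_succ, neg_pow]
    field_simp
  have hval : -(exp (-t) - ∑ n ∈ Finset.range 1, (-t) ^ n / n !) / t = (1 - exp (-t)) / t := by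
    simp [neg_sub]
  simpa only [hterm, hval] using ((hasSum_nat_add_iff' 1).mpr hexp).neg.div_const t

theorem intervalIntegral_one_sub_exp_neg_div (x : ℝ) :
    ∫ t in 0..x, (1 - exp (-t)) / t
      = ∑' n : ℕ, (-1) ^ n * x ^ (n + 1) / ((n + 1) * (n + 1)!) := by
  have hbound (n : ℕ) :
      ∀ᵐ t, t ∈ Ι 0 x → ‖(-1) ^ n * t ^ n / (n + 1)!‖ ≤ |x| ^ n / n ! := by
    refine ae_of_all _ fun t ht => ?_
    have htx : |t| ≤ |x| := by simpa using abs_sub_left_of_mem_uIcc (uIoc_subset_uIcc ht)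
    rw [norm_div, norm_mul, norm_pow, norm_pow, norm_neg, norm_one, one_pow, one_mul,
      norm_natCast, Real.norm_eq_abs]
    gcongr
    exact n.le_succ
  have hsum := intervalIntegral.hasSum_integral_of_dominated_convergence
    (F := fun (n : ℕ) (t : ℝ) => (-1) ^ n * t ^ n / (n + 1)!) (fun n _ => |x| ^ n / n !)
    (fun n => (by fun_prop : Continuous _).aestronglyMeasurable) hbound
    (ae_of_all _ fun _ _ => summable_pow_div_factorial |x|) intervalIntegrable_const
    (by filter_upwards [volume.ae_ne 0] with t ht _ using hasSum_one_sub_exp_neg_div ht)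
  rw [← hsum.tsum_eq]
  congr 1 with n
  rw [intervalIntegral.integral_div, intervalIntegral.integral_const_mul, integral_pow,
    zero_pow n.succ_ne_zero, sub_zero]
  field_simp

/-- For `x > 0`,
`E₁(x) = ∫_x^∞ e^{-t}/t dt = -log x - γ + ∑_{n=1}^∞ (-1)^{n-1} x^n / (n·n!)`
(the series is reindexed by `n ↦ n + 1`). -/
theorem expIntegral_eq_log_add_series (x : ℝ) (hx : 0 < x) :
    ∫ t in Set.Ioi x, Real.exp (-t) / t
      = -Real.log x - Real.eulerMascheroniConstant
        + ∑' n : ℕ, (-1 : ℝ) ^ n * x ^ (n + 1) / ((n + 1) * ((n + 1).factorial : ℝ)) := by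
  have hsplit := intervalIntegral.integral_interval_add_Ioi integrableOn_exp_neg_mul_log
    (integrableOn_exp_neg_mul_log.mono_set (Ioi_subset_Ioi hx.le))
  rw [integral_exp_neg_mul_log_eq_neg_eulerMascheroni, intervalIntegral_exp_neg_mul_log hx,
    integral_Ioi_exp_neg_mul_log hx, intervalIntegral_one_sub_exp_neg_div] at hsplit
  linarith
end

section
/- For every integer k ≥ 2 and every integer m with 1 ≤ m ≤ k, Σ_{i=1}^{k} (−1)^{m+i} (m+i−2)! / (((i−1)!)² (k−i)!) = δ_{m,k}, where δ_{m,k} is the Kronecker delta (equal to 1 if m = k and 0 otherwise). -/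
open Finset Function

/-!
With `m = r + 1`, `k = n + 1`, `i = j + 1`, the `j`-th summand is
`(-1)^(n+r) r!/n!` times `(-1)^(n-j) C(n,j) C(r+j,r)`, and the sum of the latter over `j ≤ n` is
the `n`-th forward difference of `x ↦ C(x,r)` at `x = r`. Since `Δ^r C(x,r) = 1`, this is `1` when
`n = r` and `0` when `n > r`.
-/

theorem fwdDiff_iter_choose_of_le {m n : ℕ} (h : m ≤ n) (y : ℕ) :
    (fwdDiff 1)^[n] (fun x ↦ x.choose m : ℕ → ℤ) y = if n = m then 1 else 0 := by
  obtain ⟨k, rfl⟩ := Nat.exists_eq_add_of_le' h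
  have hconst : (fwdDiff 1)^[m] (fun x ↦ x.choose m : ℕ → ℤ) = fun _ ↦ 1 := by
    simpa using fwdDiff_iter_choose 0 m
  -- `Δ^[k]` of a constant is constant, so its value at `y` is its value at `0`.
  rw [← fwdDiff_iter_choose_zero, iterate_add_apply, hconst]
  simpa using (fwdDiff_iter_comp_add 1 (fun _ ↦ (1 : ℤ)) y k 0).symm

theorem sum_neg_one_pow_mul_choose_mul_choose {r n : ℕ} (h : r ≤ n) :
    ∑ j ∈ range (n + 1), (-1 : ℤ) ^ (n - j) * n.choose j * (r + j).choose r =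
      if n = r then 1 else 0 := by
  have hsum := fwdDiff_iter_eq_sum_shift (1 : ℕ) (fun x ↦ (x.choose r : ℤ)) n r
  rw [fwdDiff_iter_choose_of_le h] at hsum
  simpa only [smul_eq_mul, mul_one] using hsum.symm

theorem factorial_div_eq_choose_mul_choose {K : Type*} [Field K] [CharZero K] {r n j : ℕ}
    (hj : j ≤ n) :
    ((r + j).factorial : K) / ((j.factorial : K) ^ 2 * (n - j).factorial) =
      r.factorial / n.factorial * (n.choose j * (r + j).choose r) := by
  rw [Nat.cast_choose K hj, Nat.cast_choose K (Nat.le_add_right r j), Nat.add_sub_cancel_left]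
  have hr : (r.factorial : K) ≠ 0 := Nat.cast_ne_zero.mpr r.factorial_ne_zero
  have hn : (n.factorial : K) ≠ 0 := Nat.cast_ne_zero.mpr n.factorial_ne_zero
  field_simp

theorem row_dot_b_eq_kronecker_general (k : ℕ) (m : ℕ) (hm1 : 1 ≤ m) (hm2 : m ≤ k) :
    ∑ i ∈ Finset.Icc 1 k,
        (-1 : ℚ) ^ (m + i) * ((m + i - 2).factorial : ℚ)
          / (((i - 1).factorial : ℚ) ^ 2 * ((k - i).factorial : ℚ))
      = if m = k then 1 else 0 := by
  obtain ⟨r, rfl⟩ : ∃ r, m = r + 1 := ⟨m - 1, by omega⟩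
  obtain ⟨n, rfl⟩ : ∃ n, k = n + 1 := ⟨k - 1, by omega⟩
  have hrn : r ≤ n := by omega
  rw [← Ico_add_one_right_eq_Icc, sum_Ico_eq_sum_range, Nat.add_sub_cancel]
  have hterm : ∀ j ∈ range (n + 1),
      (-1 : ℚ) ^ (r + 1 + (1 + j)) * ((r + 1 + (1 + j) - 2).factorial : ℚ)
          / (((1 + j - 1).factorial : ℚ) ^ 2 * ((n + 1 - (1 + j)).factorial : ℚ)) =
        (-1) ^ (n + r) * (r.factorial / n.factorial) *
          ((-1) ^ (n - j) * n.choose j * (r + j).choose r) := by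
    intro j hj
    have hjn : j ≤ n := Nat.lt_succ_iff.mp (mem_range.mp hj)
    have hsign : (-1 : ℚ) ^ (r + 1 + (1 + j)) = (-1) ^ (n + r) * (-1) ^ (n - j) := by
      rw [← pow_add]
      exact neg_one_pow_congr (by grind)
    rw [show r + 1 + (1 + j) - 2 = r + j by omega, Nat.add_sub_cancel_left,
      show n + 1 - (1 + j) = n - j by omega, mul_div_assoc,
      factorial_div_eq_choose_mul_choose hjn, hsign]
    ring
  have hsum := congr_arg (Int.cast : ℤ → ℚ) (sum_neg_one_pow_mul_choose_mul_choose hrn)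
  push_cast at hsum
  rw [sum_congr rfl hterm, ← mul_sum, hsum]
  by_cases hnr : n = r
  · subst hnr
    simp [Even.neg_one_pow ⟨n, rfl⟩, n.factorial_ne_zero]
  · simp [hnr, Ne.symm hnr]

/-- For `k ≥ 2` and `1 ≤ m ≤ k`,
`∑_{i=1}^k (-1)^{m+i} (m+i-2)! / (((i-1)!)² (k-i)!) = δ_{m,k}`. -/
theorem row_dot_b_eq_kronecker (k : ℕ) (hk : 2 ≤ k) (m : ℕ) (hm1 : 1 ≤ m) (hm2 : m ≤ k) :
    ∑ i ∈ Finset.Icc 1 k,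
        (-1 : ℚ) ^ (m + i) * ((m + i - 2).factorial : ℚ)
          / (((i - 1).factorial : ℚ) ^ 2 * ((k - i).factorial : ℚ))
      = if m = k then 1 else 0 :=
  row_dot_b_eq_kronecker_general k m hm1 hm2
end

section
/- For every integer k ≥ 2, Σ_{i=1}^{k−1} (−1)^{i} C(k−1, i) (k+i−1)!/i! = (k−1)! · ((−1)^{k−1} − 1). -/
/-!
With `n = k - 1` we have `(n + i)! / i! = n! * C(n + i, i)`, so the sum is `n!` times
`∑_{i=1}^{n} (-1)^i C(n, i) C(n + i, i)`. Taken over `0 ≤ i ≤ n` this alternating sum equals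
`(-1)^n`: since `(-1)^i C(n + i, i) = C(-n - 1, i)` for the generalized binomial coefficient, it is
the Chu–Vandermonde convolution `∑ C(n, n - i) C(-n - 1, i) = C(-1, n) = (-1)^n`.
-/

open Finset

theorem Int.choose_neg_succ (m i : ℕ) :
    Ring.choose (-((m : ℤ) + 1)) i = (-1) ^ i * ((m + i).choose i : ℤ) := by
  rw [Ring.choose_neg, Units.smul_def, Int.coe_negOnePow_natCast, smul_eq_mul,
    show (m : ℤ) + 1 + i - 1 = ((m + i : ℕ) : ℤ) by push_cast; ring, Ring.choose_natCast]

theorem Int.alternating_sum_range_choose_mul_add_choose (n : ℕ) :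
    ∑ i ∈ Finset.range (n + 1), (-1 : ℤ) ^ i * n.choose i * (n + i).choose i = (-1) ^ n := by
  have vandermonde := Ring.add_choose_eq (r := (n : ℤ)) (s := -((n : ℤ) + 1)) n (Commute.all _ _)
  rw [show (n : ℤ) + -((n : ℤ) + 1) = -((0 : ℕ) + 1) by simp, Int.choose_neg_succ, zero_add,
    Nat.choose_self, Nat.cast_one, mul_one, ← Nat.sum_antidiagonal_swap,
    Nat.sum_antidiagonal_eq_sum_range_succ_mk] at vandermonde
  rw [vandermonde]
  refine sum_congr rfl fun i hi => ?_
  rw [Prod.swap_prod_mk, Ring.choose_natCast, Int.choose_neg_succ,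
    Nat.choose_symm (Nat.le_of_lt_succ (mem_range.mp hi))]
  ring

theorem Nat.cast_add_factorial_div_factorial (K : Type*) [DivisionSemiring K] [CharZero K]
    (n i : ℕ) : ((n + i).factorial : K) / i.factorial = n.factorial * (n + i).choose i := by
  rw [div_eq_iff (Nat.cast_ne_zero.mpr i.factorial_ne_zero),
    ← Nat.add_choose_mul_factorial_mul_factorial, Nat.mul_comm _ n.factorial]
  push_cast
  rfl

/-- For `k ≥ 2`,
`∑_{i=1}^{k-1} (-1)^i C(k-1,i) (k+i-1)!/i! = (k-1)!((-1)^{k-1} - 1)`. -/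
theorem alternating_binomial_sum_diag (k : ℕ) (hk : 2 ≤ k) :
    ∑ i ∈ Finset.Icc 1 (k - 1),
        (-1 : ℚ) ^ i * ((k - 1).choose i : ℚ)
          * (((k + i - 1).factorial : ℚ) / (i.factorial : ℚ))
      = ((k - 1).factorial : ℚ) * ((-1 : ℚ) ^ (k - 1) - 1) := by
  obtain ⟨n, rfl⟩ : ∃ n, k = n + 1 := ⟨k - 1, by omega⟩
  have hsum : ∑ i ∈ range (n + 1), (-1 : ℚ) ^ i * n.choose i * (n + i).choose i = (-1) ^ n := by
    exact_mod_cast Int.alternating_sum_range_choose_mul_add_choose n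
  rw [range_eq_Ico, sum_eq_sum_Ico_succ_bot n.add_one_pos, Ico_add_one_right_eq_Icc] at hsum
  simp only [pow_zero, Nat.choose_zero_right, Nat.cast_one, mul_one, add_zero, zero_add] at hsum
  simp only [Nat.add_sub_cancel, Nat.add_right_comm n 1, Nat.cast_add_factorial_div_factorial,
    mul_left_comm _ (n.factorial : ℚ), ← mul_sum]
  linear_combination (n.factorial : ℚ) * hsum
end

section
/- For every integer k ≥ 2, det A^{(k−1)} = ((k−1)! (k−2)! ⋯ 2! · 1!)², i.e. the determinant of A^{(k−1)} equals the square of the product ∏_{j=1}^{k−1} j!. In particular det A^{(k−1)} ≠ 0. -/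
/-!
The Hankel matrix of the sequence `m ↦ x^m m!` has the Cholesky-type factorisation `L Lᵀ` with
`L i m = x^i i! (i choose m)` lower triangular: the `(i, j)` entry of `L Lᵀ` is
`x^(i+j) i! j! ∑ₘ (i choose m)(j choose m)`, and Vandermonde's identity sums this to
`x^(i+j) (i+j)!`. Hence the determinant is `(∏ᵢ x^i i!)²`, and for `x = -1` the signs square away.
-/

open Matrix Finset Nat

theorem Nat.sum_range_choose_mul_choose_of_lt {i n : ℕ} (j : ℕ) (hi : i < n) :
    ∑ m ∈ range n, i.choose m * j.choose m = (i + j).choose i := by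
  rw [← sum_subset (range_subset_range.2 hi) fun m _ hm => by
    rw [choose_eq_zero_of_lt (by simpa using hm), zero_mul]]
  rw [add_choose_eq, sum_antidiagonal_eq_sum_range_succ_mk, ← sum_range_reflect]
  refine sum_congr rfl fun m hm => ?_
  have hmi : m ≤ i := mem_range_succ_iff.1 hm
  rw [succ_sub_one, choose_symm hmi]

theorem Nat.prod_univ_fin_factorial (n : ℕ) : ∏ i : Fin n, (i : ℕ)! = sf (n - 1) := by
  cases n with
  | zero => rfl
  | succ n =>
    rw [Fin.prod_univ_eq_prod_range (·!), prod_range_succ_factorial, add_tsub_cancel_right]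

section FactorialHankel

variable {R : Type*} [CommRing R]

def factorialHankel (x : R) (n : ℕ) : Matrix (Fin n) (Fin n) R :=
  of fun i j => x ^ (i + j : ℕ) * ((i + j : ℕ)! : R)

def factorialPascal (x : R) (n : ℕ) : Matrix (Fin n) (Fin n) R :=
  of fun i m => x ^ (i : ℕ) * ((i : ℕ)! * (i : ℕ).choose m : R)

theorem factorialPascal_isLowerTriangular (x : R) (n : ℕ) :
    (factorialPascal x n).IsLowerTriangular := fun i m him => by
  simp [factorialPascal, choose_eq_zero_of_lt (show (i : ℕ) < m from him)]

theorem det_factorialPascal (x : R) (n : ℕ) :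
    (factorialPascal x n).det = ∏ i : Fin n, x ^ (i : ℕ) * ((i : ℕ)! : R) := by
  rw [det_of_isLowerTriangular _ (factorialPascal_isLowerTriangular x n)]
  simp [factorialPascal]

theorem factorialPascal_mul_transpose (x : R) (n : ℕ) :
    factorialPascal x n * (factorialPascal x n)ᵀ = factorialHankel x n := by
  ext i j
  have hsum : ∑ m : Fin n, ((i : ℕ).choose m * (j : ℕ).choose m : R) =
      ((i + j : ℕ).choose i : R) := by
    have := congrArg (Nat.cast (R := R))
      ((Fin.sum_univ_eq_sum_range (fun m => (i : ℕ).choose m * (j : ℕ).choose m) n).trans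
        (sum_range_choose_mul_choose_of_lt j i.2))
    push_cast at this
    exact this
  calc (factorialPascal x n * (factorialPascal x n)ᵀ) i j
      = x ^ (i + j : ℕ) * ((i : ℕ)! * (j : ℕ)! : R) *
          ∑ m : Fin n, ((i : ℕ).choose m * (j : ℕ).choose m : R) := by
        simp only [mul_apply, transpose_apply, factorialPascal, of_apply, mul_sum, pow_add]
        exact sum_congr rfl fun m _ => by ring
    _ = factorialHankel x n i j := by
        rw [hsum, factorialHankel, of_apply, choose_symm_add,
          ← add_choose_mul_factorial_mul_factorial]
        push_cast
        ring

theorem det_factorialHankel (x : R) (n : ℕ) :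
    (factorialHankel x n).det = (∏ i : Fin n, x ^ (i : ℕ) * ((i : ℕ)! : R)) ^ 2 := by
  rw [← factorialPascal_mul_transpose, det_mul, det_transpose, det_factorialPascal, sq]

end FactorialHankel

theorem det_A_eq_superfactorial_sq_general (k : ℕ) :
    letI A : Matrix (Fin k) (Fin k) ℝ :=
      fun i j => (-1 : ℝ) ^ (i.1 + j.1) * ((i.1 + j.1).factorial : ℝ)
    A.det = (∏ j ∈ Finset.Icc 1 (k - 1), (j.factorial : ℝ)) ^ 2 ∧ A.det ≠ 0 := by
  have hdet : (factorialHankel (-1 : ℝ) k).det = (∏ j ∈ Icc 1 (k - 1), (j ! : ℝ)) ^ 2 := by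
    rw [det_factorialHankel, ← prod_pow, ← cast_prod, prod_Icc_factorial,
      ← prod_univ_fin_factorial, cast_prod, ← prod_pow]
    refine prod_congr rfl fun i _ => ?_
    rw [mul_pow, ← pow_mul, pow_mul', neg_one_sq, one_pow, one_mul]
  show (factorialHankel (-1 : ℝ) k).det = _ ∧ (factorialHankel (-1 : ℝ) k).det ≠ 0
  rw [hdet]
  exact ⟨rfl, by positivity⟩

/-- For `k ≥ 2` (entries indexed `0, …, k-1` here, so the `(i,j)` entry
is `(-1)^{i+j}(i+j)!`): `det A^{(k-1)} = ((k-1)!(k-2)!⋯2!·1!)²`, and in particular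
`det A^{(k-1)} ≠ 0`. -/
theorem det_A_eq_superfactorial_sq (k : ℕ) (hk : 2 ≤ k) :
    letI A : Matrix (Fin k) (Fin k) ℝ :=
      fun i j => (-1 : ℝ) ^ (i.1 + j.1) * ((i.1 + j.1).factorial : ℝ)
    A.det = (∏ j ∈ Finset.Icc 1 (k - 1), (j.factorial : ℝ)) ^ 2 ∧ A.det ≠ 0 :=
  det_A_eq_superfactorial_sq_general k
end

section
/- For every integer k ≥ 2, det A^{(k−1)}_{k,1} = (−1)^{k+1} (k−1)! ((k−2)! (k−3)! ⋯ 2! · 1!)², i.e. the determinant of the submatrix obtained from A^{(k−1)} by deleting the k-th row and the 1st column equals (−1)^{k+1}(k−1)! times the square of ∏_{j=1}^{k−2} j!. -/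
/-!
After deleting the last row and the first column, the `(i, j)` entry (indices from `0`) is
`(-1)^(i+j+1) (i+j+1)! = (-1)^i i! · (-1)^(j+1) (j+1)! · C(i+j+1, i)`, so the determinant is
`∏ (-1)^i i! (-1)^(i+1) (i+1)!` times the determinant of the binomial matrix `C(i+j+1, i)`.
By Vandermonde's identity that matrix is `L Pᵀ` with `L i k = C(i+1, k+1)` and `P j k = C(j, k)`,
both lower unitriangular, so its determinant is `1`.
-/

open Matrix Finset Nat

theorem Nat.sum_range_choose_add_mul_choose (m i j N : ℕ) (hi : i < N) :
    ∑ k ∈ range N, (i + m).choose (k + m) * j.choose k = (i + j + m).choose i := by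
  rw [show i + j + m = j + (i + m) by ring, Nat.add_choose_eq,
    Nat.sum_antidiagonal_eq_sum_range_succ_mk]
  refine (sum_subset (range_subset_range.2 hi) fun k _ hk => ?_).symm.trans
    (sum_congr rfl fun k hk => ?_)
  · rw [Nat.choose_eq_zero_of_lt (by simp at hk; omega), zero_mul]
  · rw [mul_comm, ← Nat.add_sub_add_right i m k, Nat.choose_symm (by simp at hk; omega)]

theorem Matrix.det_of_choose_add_add {R : Type*} [CommRing R] (m n : ℕ) :
    det (of fun i j : Fin n => (((i + j + m : ℕ).choose i : ℕ) : R)) = 1 := by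
  set L : Matrix (Fin n) (Fin n) R := of fun i k => ((i + m : ℕ).choose (k + m) : R)
  set P : Matrix (Fin n) (Fin n) R := of fun j k => ((j : ℕ).choose k : R)
  have hfactor : of (fun i j : Fin n => (((i + j + m : ℕ).choose i : ℕ) : R)) = L * Pᵀ := by
    ext i j
    simp only [L, P, of_apply, mul_apply, transpose_apply, ← Nat.cast_mul, ← Nat.cast_sum]
    rw [Fin.sum_univ_eq_sum_range (fun k => (i + m : ℕ).choose (k + m) * (j : ℕ).choose k),
      Nat.sum_range_choose_add_mul_choose m i j n i.2]
  have hL : L.IsLowerTriangular := fun i k (h : i < k) => by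
    simp [L, Nat.choose_eq_zero_of_lt (show (i : ℕ) + m < k + m by omega)]
  have hP : P.IsLowerTriangular := fun j k (h : j < k) => by
    simp [P, Nat.choose_eq_zero_of_lt (show (j : ℕ) < k by omega)]
  rw [hfactor, det_mul, det_transpose, det_of_isLowerTriangular L hL,
    det_of_isLowerTriangular P hP]
  simp [L, P]

theorem Nat.factorial_add_add_one_eq (i j : ℕ) :
    (i + (j + 1))! = i ! * (j + 1)! * (i + j + 1).choose i := by
  rw [show i + j + 1 = j + 1 + i by ring, show i + (j + 1) = j + 1 + i by ring,
    ← Nat.add_choose_mul_factorial_mul_factorial (j + 1) i]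
  ring

theorem Nat.prod_range_factorial_mul_factorial_succ (n : ℕ) :
    ∏ k ∈ range (n + 1), (k ! * (k + 1)!) = (n + 1)! * (∏ j ∈ Icc 1 n, j !) ^ 2 := by
  induction n with
  | zero => simp
  | succ n ih =>
    rw [prod_range_succ, ih, prod_Icc_succ_top (by omega), Nat.factorial_succ (n + 1)]
    ring

/-- For `k = n + 2 ≥ 2` (entries indexed from `0` here, so the `(i,j)`
entry is `(-1)^{i+j}(i+j)!`): the minor of `A^{(k-1)}` deleting the `k`-th (last) row and
the `1`st column has determinant `(-1)^{k+1}(k-1)!((k-2)!(k-3)!⋯2!·1!)²`. -/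
theorem det_minor_last_row_first_col (n : ℕ) :
    letI A : Matrix (Fin (n + 2)) (Fin (n + 2)) ℝ :=
      fun i j => (-1 : ℝ) ^ (i.1 + j.1) * ((i.1 + j.1).factorial : ℝ)
    (A.submatrix (Fin.last (n + 1)).succAbove (0 : Fin (n + 2)).succAbove).det
      = (-1 : ℝ) ^ ((n + 2) + 1) * (((n + 1).factorial : ℝ))
          * (∏ j ∈ Finset.Icc 1 n, (j.factorial : ℝ)) ^ 2 := by
  set v : ℕ → ℝ := fun i => (-1) ^ i * (i ! : ℝ)
  set B : Matrix (Fin (n + 1)) (Fin (n + 1)) ℝ := of fun i j => (((i + j + 1 : ℕ).choose i : ℕ) : ℝ)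
  have hminor : submatrix (fun i j : Fin (n + 2) => (-1 : ℝ) ^ (i.1 + j.1) * ((i.1 + j.1)! : ℝ))
      (Fin.last (n + 1)).succAbove (0 : Fin (n + 2)).succAbove
      = of fun i j : Fin (n + 1) => v i * (of fun i j : Fin (n + 1) => v (j + 1) * B i j) i j := by
    ext i j
    simp only [submatrix, of_apply, Fin.succAbove_last, Fin.succAbove_zero, Fin.val_castSucc,
      Fin.val_succ, v, B]
    rw [pow_add, Nat.factorial_add_add_one_eq]
    push_cast
    ring
  have hsign (k : ℕ) : v k * v (k + 1) = -((k ! * (k + 1)! : ℕ) : ℝ) := by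
    simp only [v, Nat.cast_mul]
    rw [show (-1 : ℝ) ^ k * k ! * ((-1) ^ (k + 1) * (k + 1)!)
      = (-1) ^ (2 * k + 1) * (k ! * (k + 1)!) by ring, pow_succ, pow_mul]
    norm_num
  rw [hminor, det_mul_column, det_mul_row, det_of_choose_add_add, mul_one, ← prod_mul_distrib,
    Fin.prod_univ_eq_prod_range (fun k => v k * v (k + 1)), prod_congr rfl fun k _ => hsign k,
    prod_neg, card_range, ← Nat.cast_prod, Nat.prod_range_factorial_mul_factorial_succ]
  push_cast
  ring
end

section
/- For every integer k ≥ 0, s_k(x) = Σ_{l=0}^{k} (C(k, l)/l!) x^{l}; i.e., the coefficient S_l^{(k)} of x^l in s_k(x) equals C(k, l)/l! for 0 ≤ l ≤ k. -/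
/-!
The explicit polynomial is `L_k(-x)` for the Laguerre polynomial `L_k`, and it satisfies the same
three-term recurrence as `s_k`: comparing coefficients of `x^(r+1)` reduces it to Pascal's rule and
the absorption identity `C(n+1, r) (n+1-r) = C(n, r) (n+1)`. Two sequences obeying one two-step
recurrence with the same first two terms coincide.
-/

open Polynomial Finset

theorem Nat.eq_of_two_step_recurrence {α : Type*} {s t : ℕ → α} (F : ℕ → α → α → α)
    (hs : ∀ k, s (k + 2) = F k (s (k + 1)) (s k)) (ht : ∀ k, t (k + 2) = F k (t (k + 1)) (t k))
    (h0 : s 0 = t 0) (h1 : s 1 = t 1) : s = t := by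
  funext k
  induction k using Nat.twoStepInduction with
  | zero => exact h0
  | one => exact h1
  | more k ihk ihk1 => rw [hs, ht, ihk, ihk1]

theorem Nat.cast_choose_mul_sub_eq {R : Type*} [Ring R] (n k : ℕ) :
    ((n + 1).choose k : R) * ((n : R) + 1 - k) = (n.choose k : R) * ((n : R) + 1) := by
  rcases le_or_gt k (n + 1) with hk | hk
  · have h := congrArg (Nat.cast (R := R)) (Nat.choose_mul_succ_eq n k)
    push_cast [hk] at h
    exact h.symm
  · rw [Nat.choose_eq_zero_of_lt hk, Nat.choose_eq_zero_of_lt (by omega)]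
    simp

section

variable (K : Type*) [Field K]

noncomputable def negLaguerre (k : ℕ) : K[X] :=
  ∑ l ∈ range (k + 1), C ((k.choose l : K) / (l.factorial : K)) * X ^ l

variable {K}

theorem coeff_negLaguerre (k n : ℕ) :
    (negLaguerre K k).coeff n = (k.choose n : K) / (n.factorial : K) := by
  rw [negLaguerre, finsetSum_coeff]
  simp only [coeff_C_mul_X_pow]
  rw [Finset.sum_ite_eq (range (k + 1)) n]
  split_ifs with h
  · rfl
  · rw [Nat.choose_eq_zero_of_lt (by simpa [Nat.lt_succ_iff] using h), Nat.cast_zero, zero_div]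

theorem negLaguerre_succ_succ [CharZero K] (k : ℕ) :
    C ((k : K) + 2) * negLaguerre K (k + 2) =
      (C (2 * (k : K) + 3) + X) * negLaguerre K (k + 1) - C ((k : K) + 1) * negLaguerre K k := by
  ext (_ | r) <;>
    simp only [coeff_sub, coeff_C_mul, add_mul, coeff_add, coeff_X_mul, coeff_X_mul_zero,
      coeff_negLaguerre]
  · simp only [Nat.choose_zero_right, Nat.factorial_zero, Nat.cast_one, div_one]
    ring
  · have hpascal₁ := Nat.choose_succ_succ (k + 1) r
    have hpascal₂ := Nat.choose_succ_succ k r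
    have habsorb := Nat.cast_choose_mul_sub_eq (R := K) k r
    rw [Nat.factorial_succ]
    push_cast [hpascal₁, hpascal₂] at habsorb ⊢
    field_simp
    congr 1
    linear_combination habsorb

end

/-- With `s₀ = 1`, `s₁ = 1 + x` and
`sₖ = ((2k-1+x)/k) s_{k-1} - ((k-1)/k) s_{k-2}` for `k ≥ 2`:
`sₖ(x) = ∑_{l=0}^{k} (C(k,l)/l!) x^l` for every `k ≥ 0`. -/
theorem s_explicit
    (s : ℕ → Polynomial ℚ)
    (hs0 : s 0 = 1) (hs1 : s 1 = 1 + X)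
    (hs : ∀ k : ℕ, 2 ≤ k →
      s k = C (1 / (k : ℚ)) * (C (2 * (k : ℚ) - 1) + X) * s (k - 1)
              - C (((k : ℚ) - 1) / (k : ℚ)) * s (k - 2)) :
    ∀ k : ℕ,
      s k = ∑ l ∈ Finset.range (k + 1), C ((k.choose l : ℚ) / (l.factorial : ℚ)) * X ^ l := by
  suffices s = negLaguerre ℚ from fun k ↦ congrFun this k
  refine Nat.eq_of_two_step_recurrence
    (fun k p q ↦ C (1 / ((k + 2 : ℕ) : ℚ)) * (C (2 * ((k + 2 : ℕ) : ℚ) - 1) + X) * p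
      - C ((((k + 2 : ℕ) : ℚ) - 1) / ((k + 2 : ℕ) : ℚ)) * q)
    (fun k ↦ hs (k + 2) le_add_self) (fun k ↦ ?_) ?_ ?_
  · have hk : (k : ℚ) + 2 ≠ 0 := by positivity
    calc negLaguerre ℚ (k + 2)
        = C (1 / ((k : ℚ) + 2)) * (C ((k : ℚ) + 2) * negLaguerre ℚ (k + 2)) := by
          rw [← mul_assoc, ← C_mul, one_div_mul_cancel hk, C_1, one_mul]
      _ = _ := by
          rw [negLaguerre_succ_succ]
          push_cast
          rw [show 2 * ((k : ℚ) + 2) - 1 = 2 * k + 3 by ring,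
            show ((k : ℚ) + 2 - 1) / (k + 2) = 1 / (k + 2) * (k + 1) by ring, C_mul]
          ring
  · simp [hs0, negLaguerre]
  · simp [hs1, negLaguerre, sum_range_succ]
end

section
/- For every integer k ≥ 1, r_k(x) = −Σ_{k'=0}^{k−1} Σ_{l=0}^{k−k'−1} (C(k, l+k'+1) · l!/(l+k'+1)!) (−1)^{l} x^{k'}. -/
/-!
Put `a k i = ∑ₗ C(k, l+i) l!/(l+i)! (-1)^l`, so that the claimed polynomial is `-ρ k` with
`ρ k = ∑_{j<k} a k (j+1) X^j`. It suffices that `ρ` obeys the recurrence of `r`, with `ρ 0 = 0`,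
`ρ 1 = 1`. Comparing coefficients of `X^j` in `k ρ k + (k-1) ρ (k-2) = (2k-1+X) ρ (k-1)`, the
factor `X` shifts `a (k-1) (j+1)` to `a (k-1) j`, and the identity holds term by term in `l`: it is
`(m+2) C(m+2,j+1) + (m+1) C(m,j+1) = (2m+3) C(m+1,j+1) + (j+1) C(m+1,j)`, a consequence of Pascal's
rule and `(n+1) C(n,j) = (j+1) C(n+1,j+1)`. At `j = 0` the shifted coefficient `a (k-1) 0` is an
alternating binomial sum, hence `0`.
-/

open Polynomial Finset
open scoped Nat

theorem cast_choose_three_term (m j : ℕ) :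
    ((m : ℚ) + 2) * (m + 2).choose (j + 1) + ((m : ℚ) + 1) * m.choose (j + 1)
      = (2 * (m : ℚ) + 3) * (m + 1).choose (j + 1) + ((j : ℚ) + 1) * (m + 1).choose j := by
  have h₁ := Nat.add_one_mul_choose_eq (m + 1) j
  have h₂ := Nat.add_one_mul_choose_eq m j
  have p₁ := Nat.choose_succ_succ' (m + 1) j
  have p₂ := Nat.choose_succ_succ' m j
  qify at h₁ h₂ p₁ p₂
  linear_combination h₁ - h₂ + ((m : ℚ) + j + 3) * p₁ - ((m : ℚ) + 1) * p₂

def rTerm (k i l : ℕ) : ℚ := (k.choose (l + i) : ℚ) * l ! / (l + i)! * (-1) ^ l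

def rCoeff (k i : ℕ) : ℚ := ∑ l ∈ range (k + 1 - i), rTerm k i l

noncomputable def rPoly (k : ℕ) : ℚ[X] := ∑ j ∈ range k, C (rCoeff k (j + 1)) * X ^ j

theorem rTerm_three_term (m i l : ℕ) :
    ((m : ℚ) + 2) * rTerm (m + 2) (i + 1) l + ((m : ℚ) + 1) * rTerm m (i + 1) l
      = (2 * (m : ℚ) + 3) * rTerm (m + 1) (i + 1) l + rTerm (m + 1) i l := by
  set f : ℚ := l ! / (l + i + 1)! * (-1) ^ l
  have hshift (k : ℕ) : rTerm k (i + 1) l = k.choose (l + i + 1) * f := by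
    simp only [rTerm, f, ← add_assoc]; ring
  have hlower : rTerm (m + 1) i l = ((l + i : ℕ) + 1) * (m + 1).choose (l + i) * f := by
    simp only [rTerm, f, Nat.factorial_succ]
    push_cast
    field_simp
  rw [hshift, hshift, hshift, hlower]
  linear_combination f * cast_choose_three_term m (l + i)

theorem rCoeff_eq_sum_range {k i N : ℕ} (hN : k + 1 - i ≤ N) :
    rCoeff k i = ∑ l ∈ range N, rTerm k i l := by
  refine sum_subset (range_subset_range.2 hN) fun l _ hl => ?_
  rw [mem_range, not_lt] at hl
  simp [rTerm, Nat.choose_eq_zero_of_lt (show k < l + i by omega)]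

theorem rCoeff_three_term (m i : ℕ) :
    ((m : ℚ) + 2) * rCoeff (m + 2) (i + 1) + ((m : ℚ) + 1) * rCoeff m (i + 1)
      = (2 * (m : ℚ) + 3) * rCoeff (m + 1) (i + 1) + rCoeff (m + 1) i := by
  rw [rCoeff_eq_sum_range (N := m + 3) (by omega), rCoeff_eq_sum_range (N := m + 3) (by omega),
    rCoeff_eq_sum_range (N := m + 3) (by omega), rCoeff_eq_sum_range (N := m + 3) (by omega)]
  simp only [mul_sum, ← sum_add_distrib, rTerm_three_term]

theorem rCoeff_succ_zero (k : ℕ) : rCoeff (k + 1) 0 = 0 := by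
  have h := Int.alternating_sum_range_choose_of_ne k.succ_ne_zero
  simp only [rCoeff, rTerm, add_zero, Nat.sub_zero]
  have hfac (l : ℕ) : ((l ! : ℕ) : ℚ) / (l ! : ℕ) = 1 := div_self (by positivity)
  simp only [mul_div_assoc, hfac, mul_one, mul_comm _ ((-1 : ℚ) ^ _)]
  exact_mod_cast h

theorem coeff_rPoly (k j : ℕ) : (rPoly k).coeff j = rCoeff k (j + 1) := by
  simp only [rPoly, finsetSum_coeff, coeff_C_mul_X_pow, sum_ite_eq, mem_range]
  split_ifs with hj
  · rfl
  · rw [rCoeff, show k + 1 - (j + 1) = 0 by omega, range_zero, sum_empty]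

theorem coeff_X_mul_rPoly (k n : ℕ) : (X * rPoly (k + 1)).coeff n = rCoeff (k + 1) n := by
  cases n with
  | zero => rw [mul_coeff_zero, coeff_X_zero, zero_mul, rCoeff_succ_zero]
  | succ n => rw [coeff_X_mul, coeff_rPoly]

theorem rPoly_three_term (m : ℕ) :
    C ((m : ℚ) + 2) * rPoly (m + 2) + C ((m : ℚ) + 1) * rPoly m
      = (C (2 * (m : ℚ) + 3) + X) * rPoly (m + 1) := by
  ext n
  simp only [coeff_add, coeff_C_mul, add_mul, coeff_X_mul_rPoly, coeff_rPoly]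
  linear_combination rCoeff_three_term m n

theorem rPoly_recurrence (n : ℕ) :
    rPoly (n + 2) = C (1 / ((n + 2 : ℕ) : ℚ)) * (C (2 * ((n + 2 : ℕ) : ℚ) - 1) + X) * rPoly (n + 1)
      - C ((((n + 2 : ℕ) : ℚ) - 1) / ((n + 2 : ℕ) : ℚ)) * rPoly n := by
  have hu : C (1 / ((n : ℚ) + 2)) * C ((n : ℚ) + 2) = 1 := by
    rw [← C_mul, one_div_mul_cancel (by positivity), C_1]
  have hc : ((n : ℚ) + 2 - 1) / ((n : ℚ) + 2) = ((n : ℚ) + 1) * (1 / ((n : ℚ) + 2)) := by ring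
  push_cast
  rw [hc, C_mul, show 2 * ((n : ℚ) + 2) - 1 = 2 * (n : ℚ) + 3 by ring]
  linear_combination C (1 / ((n : ℚ) + 2)) * rPoly_three_term n - rPoly (n + 2) * hu

theorem rPoly_zero : rPoly 0 = 0 := rfl

theorem rPoly_one : rPoly 1 = 1 := by simp [rPoly, rCoeff, rTerm]

theorem rPoly_eq_sum (k : ℕ) :
    rPoly k = ∑ k' ∈ range k, ∑ l ∈ range (k - k'),
      C ((k.choose (l + k' + 1) : ℚ) * (l ! : ℚ) / ((l + k' + 1)! : ℚ) * (-1 : ℚ) ^ l) * X ^ k' := by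
  refine sum_congr rfl fun k' _ => ?_
  rw [rCoeff, Nat.add_sub_add_right, map_sum, sum_mul]
  rfl

/-- With `r₀ = 0`, `r₁ = -1` and
`rₖ = ((2k-1+x)/k) r_{k-1} - ((k-1)/k) r_{k-2}` for `k ≥ 2`:
`rₖ(x) = -∑_{k'=0}^{k-1} ∑_{l=0}^{k-k'-1} (C(k,l+k'+1)·l!/(l+k'+1)!) (-1)^l x^{k'}`
for every `k ≥ 1`. -/
theorem r_explicit
    (r : ℕ → Polynomial ℚ)
    (hr0 : r 0 = 0) (hr1 : r 1 = -1)
    (hr : ∀ k : ℕ, 2 ≤ k →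
      r k = C (1 / (k : ℚ)) * (C (2 * (k : ℚ) - 1) + X) * r (k - 1)
              - C (((k : ℚ) - 1) / (k : ℚ)) * r (k - 2)) :
    ∀ k : ℕ, 1 ≤ k →
      r k = -∑ k' ∈ Finset.range k, ∑ l ∈ Finset.range (k - k'),
              C ((k.choose (l + k' + 1) : ℚ) * (l.factorial : ℚ)
                  / ((l + k' + 1).factorial : ℚ) * (-1 : ℚ) ^ l) * X ^ k' := by
  have hr_eq (k : ℕ) : r k = -rPoly k := by
    induction k using Nat.twoStepInduction with
    | zero => rw [hr0, rPoly_zero, neg_zero]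
    | one => rw [hr1, rPoly_one]
    | more n ih₀ ih₁ =>
      rw [hr (n + 2) (by omega), show n + 2 - 1 = n + 1 from rfl, show n + 2 - 2 = n from rfl,
        ih₀, ih₁, rPoly_recurrence]
      ring
  intro k _
  rw [hr_eq, rPoly_eq_sum]
end

section
/- For every integer k ≥ 1, the Laurent polynomial −k x^{k}(r_k(x) − r_{k−1}(x)) − k x^{k}(s_k(x) − s_{k−1}(x)) · (Σ_{l=1}^{2k} (−1)^{l−1}(l−1)! x^{−l}) is congruent to the constant k! modulo x^{−1}ℚ[x^{−1}]; that is, its coefficient of x^{j} vanishes for every j ≥ 1 and its constant coefficient equals k!. -/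
/-!
Let `F = ∑_{n ≥ 0} (-1)^n n! x^{-n-1}` be Euler's divergent series. The sequences `r_k`, `s_k`
satisfy the Laguerre recurrence, hence so does `H_k = r_k + s_k F`. The numbers
`ψ_k(n) = (-1)^{k+n} n! C(n,k)` satisfy the same recurrence (a binomial identity) and match the
coefficients of `x^{-n-1}` in `H_0 = F` and `H_1 = -1 + (1 + x) F`, so `H_k = ∑ ψ_k(n) x^{-n-1}`,
which is `O(x^{-k-1})`. Truncating `F` after `x^{-2k}` only changes `H_m` below degree `m - 2k`.
Hence `x^k (H_k - H_{k-1})` has no terms of positive degree and constant term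
`-ψ_{k-1}(k-1) = -(k-1)!`, and the expression of the theorem is `-k x^k (H_k - H_{k-1})`.
-/

open Polynomial Finset LaurentPolynomial

namespace LaurentPolynomial
variable {R : Type*}

theorem coeff_C_mul [Semiring R] (a : R) (p : R[T;T⁻¹]) (d : ℤ) :
    (C a * p).coeff d = a * p.coeff d := by
  rw [← single_eq_C, AddMonoidAlgebra.coeff_single_mul_apply, neg_zero, zero_add]

theorem coeff_T_mul [Semiring R] (n : ℤ) (p : R[T;T⁻¹]) (d : ℤ) :
    (T n * p).coeff d = p.coeff (d - n) := by
  rw [T, AddMonoidAlgebra.coeff_single_mul_apply, one_mul, neg_add_eq_sub]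

end LaurentPolynomial

section Binomial
variable {R : Type*} [CommRing R]

theorem Nat.cast_add_one_mul_choose_add_one (n k : ℕ) :
    ((k : R) + 1) * n.choose (k + 1) = ((n : R) - k) * n.choose k := by
  have h := congrArg (Nat.cast : ℕ → R) (Nat.add_one_mul_choose_eq n k)
  rw [Nat.choose_succ_succ'] at h
  push_cast at h
  linear_combination -h

theorem Nat.cast_add_two_mul_choose_add_two (m n : ℕ) :
    ((m : R) + 2) * n.choose (m + 2) =
      ((n : R) + 1) * (n + 1).choose (m + 1) - (2 * m + 3) * n.choose (m + 1)
        - (m + 1) * n.choose m := by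
  have h := Nat.cast_add_one_mul_choose_add_one (R := R) n (m + 1)
  rw [Nat.choose_succ_succ']
  push_cast at h ⊢
  linear_combination h + Nat.cast_add_one_mul_choose_add_one (R := R) n m

end Binomial

section LaguerreRec
variable {R : Type*} [CommRing R]

/-- The three-term recurrence of the Laguerre polynomials `L_k(-x)`, which is the one defining
`r_k` and `s_k` (shifted so that `k = m + 2`). -/
def LaguerreRec (x : R) (y : ℕ → R) : Prop :=
  ∀ m : ℕ, ((m : R) + 2) * y (m + 2) = (2 * m + 3 + x) * y (m + 1) - (m + 1) * y m

theorem LaguerreRec.coeff {y : ℕ → R[T;T⁻¹]} (h : LaguerreRec (T 1) y)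
    (m : ℕ) (d : ℤ) :
    ((m : R) + 2) * (y (m + 2)).coeff d =
      (2 * m + 3) * (y (m + 1)).coeff d + (y (m + 1)).coeff (d - 1) - (m + 1) * (y m).coeff d := by
  have := congrArg (fun p => p.coeff d) (h m)
  simp only [← map_natCast LaurentPolynomial.C, ← map_ofNat LaurentPolynomial.C,
    ← map_one LaurentPolynomial.C, add_mul, AddMonoidAlgebra.coeff_sub, AddMonoidAlgebra.coeff_add,
    Finsupp.add_apply, Finsupp.sub_apply, mul_assoc, LaurentPolynomial.coeff_C_mul,
    coeff_T_mul] at this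
  linear_combination this

theorem LaguerreRec.add_mul {x : R} {u v : ℕ → R} (hu : LaguerreRec x u)
    (hv : LaguerreRec x v) (g : R) : LaguerreRec x (fun m => u m + v m * g) := fun m => by
  linear_combination hu m + g * hv m

theorem LaguerreRec.map {S : Type*} [CommRing S] {x : R} {y : ℕ → R}
    (h : LaguerreRec x y) (φ : R →+* S) : LaguerreRec (φ x) (fun m => φ (y m)) := fun m => by
  simpa only [map_mul, map_add, map_sub, map_natCast, map_ofNat, map_one] using congrArg φ (h m)

end LaguerreRec

theorem laguerreRec_of_eq {K : Type*} [Field K] [CharZero K] (y : ℕ → K[X]) (hy : ∀ k : ℕ, 2 ≤ k →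
      y k = Polynomial.C (1 / (k : K)) * (Polynomial.C (2 * (k : K) - 1) + X) * y (k - 1)
              - Polynomial.C (((k : K) - 1) / (k : K)) * y (k - 2)) : LaguerreRec X y := by
  intro m
  set c : K := ((m + 2 : ℕ) : K)
  have hc0 : c ≠ 0 := Nat.cast_ne_zero.mpr (by omega)
  have e1 : ((m : K[X]) + 2) = Polynomial.C c := by simp [c, Polynomial.C_ofNat]
  have e2 : (2 * (m : K[X]) + 3) = Polynomial.C (2 * c - 1) := by simp [c, Polynomial.C_ofNat]; ring
  have e3 : ((m : K[X]) + 1) = Polynomial.C (c - 1) := by simp [c, Polynomial.C_ofNat]; ring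
  have h1 : Polynomial.C c * Polynomial.C (1 / c) = 1 := by
    rw [← map_mul, mul_one_div_cancel hc0, map_one]
  have h2 : Polynomial.C c * Polynomial.C ((c - 1) / c) = Polynomial.C (c - 1) := by
    rw [← map_mul, mul_div_cancel₀ _ hc0]
  rw [hy (m + 2) (by omega), Nat.add_sub_cancel, show m + 2 - 1 = m + 1 from rfl, e1, e2, e3]
  linear_combination (Polynomial.C (2 * c - 1) + X) * y (m + 1) * h1 - y m * h2

/-- `remainderCoeff m (-(n + 1)) = (-1)^(m+n) n! C(n,m)` is the coefficient of `x^{-n-1}` in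
`r_m + s_m F`; there are no terms of degree `≥ 0`. -/
def remainderCoeff {R : Type*} [Ring R] (m : ℕ) : ℤ → R
  | .ofNat _ => 0
  | .negSucc n => (-1) ^ (m + n) * n.factorial * n.choose m

section
variable {R : Type*} [CommRing R]

theorem remainderCoeff_of_lt {m : ℕ} {d : ℤ} (hd : -(m + 1 : ℤ) < d) :
    remainderCoeff (R := R) m d = 0 := by
  cases d with
  | ofNat => rfl
  | negSucc n =>
    rw [Int.negSucc_eq] at hd
    simp [remainderCoeff, Nat.choose_eq_zero_of_lt (show n < m by omega)]

theorem remainderCoeff_neg_self (m : ℕ) :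
    remainderCoeff (R := R) m (-(m + 1 : ℤ)) = m.factorial := by
  rw [← Int.negSucc_eq, remainderCoeff, ← two_mul, pow_mul]
  simp

theorem remainderCoeff_add_two (m : ℕ) (d : ℤ) :
    ((m : R) + 2) * remainderCoeff (m + 2) d =
      (2 * m + 3) * remainderCoeff (m + 1) d + remainderCoeff (m + 1) (d - 1)
        - (m + 1) * remainderCoeff m d := by
  rcases d with ((_ | n) | n)
  · rw [show Int.ofNat 0 - 1 = Int.negSucc 0 from rfl]
    simp [remainderCoeff]
  · simp [remainderCoeff]
  · rw [show Int.negSucc n - 1 = Int.negSucc (n + 1) from rfl]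
    simp only [remainderCoeff]
    rw [Nat.factorial_succ]
    push_cast
    linear_combination
      (-1) ^ (m + n) * (n.factorial : R) * Nat.cast_add_two_mul_choose_add_two (R := R) m n

/-- `F` truncated after the term `x^{-N}`. -/
noncomputable def eulerSeries (R : Type*) [Ring R] (N : ℕ) : R[T;T⁻¹] :=
  ∑ l ∈ Finset.Icc 1 N, LaurentPolynomial.C ((-1 : R) ^ (l - 1) * (l - 1).factorial) * T (-(l : ℤ))

theorem coeff_eulerSeries {N : ℕ} {d : ℤ} (hd : -(N : ℤ) ≤ d) :
    (eulerSeries R N).coeff d = remainderCoeff 0 d := by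
  simp only [eulerSeries, AddMonoidAlgebra.coeff_sum, Finset.sum_apply',
    LaurentPolynomial.coeff_C_mul, T_apply, mul_ite, mul_one, mul_zero]
  rcases d with n | n
  · refine Finset.sum_eq_zero fun l hl => if_neg ?_
    rw [Finset.mem_Icc] at hl
    rw [Int.ofNat_eq_natCast]
    omega
  · rw [Int.negSucc_eq] at hd ⊢
    rw [Finset.sum_eq_single_of_mem (n + 1) (Finset.mem_Icc.mpr ⟨by omega, by omega⟩)
      (fun l _ hl => if_neg (by omega)), if_pos (by push_cast; ring), ← Int.negSucc_eq]
    simp [remainderCoeff]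

theorem coeff_neg_one_add_one_add_T_mul {g : R[T;T⁻¹]} {N : ℕ}
    (hg : ∀ d : ℤ, -(N : ℤ) ≤ d → g.coeff d = remainderCoeff 0 d) {d : ℤ} (hd : 1 - (N : ℤ) ≤ d) :
    (-1 + (1 + T 1) * g).coeff d = remainderCoeff 1 d := by
  have h1 : (-1 : R[T;T⁻¹]).coeff d = if d = 0 then -1 else 0 := by
    rw [← map_one LaurentPolynomial.C, ← map_neg, C_apply]
  simp only [add_mul, one_mul, AddMonoidAlgebra.coeff_add, Finsupp.add_apply, h1, coeff_T_mul,
    hg d (by omega), hg (d - 1) (by omega)]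
  rcases d with ((_ | n) | n)
  · rw [show Int.ofNat 0 - 1 = Int.negSucc 0 from rfl]
    simp [remainderCoeff]
  · rw [if_neg (by simp; omega)]
    simp [remainderCoeff]
  · rw [show Int.negSucc n - 1 = Int.negSucc (n + 1) from rfl, if_neg (Int.negSucc_ne_zero n)]
    simp only [remainderCoeff, Nat.factorial_succ, Nat.choose_zero_right, Nat.choose_one_right]
    push_cast
    ring

theorem coeff_eq_remainderCoeff {K : Type*} [Field K] [CharZero K] {H : ℕ → K[T;T⁻¹]} {N : ℕ}
    (hH : LaguerreRec (T 1) H)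
    (h0 : ∀ d : ℤ, -(N : ℤ) ≤ d → (H 0).coeff d = remainderCoeff 0 d)
    (h1 : ∀ d : ℤ, 1 - (N : ℤ) ≤ d → (H 1).coeff d = remainderCoeff 1 d) (m : ℕ) :
    ∀ d : ℤ, m - (N : ℤ) ≤ d → (H m).coeff d = remainderCoeff m d := by
  induction m using Nat.twoStepInduction with
  | zero => simpa using h0
  | one => simpa using h1
  | more m ih₀ ih₁ =>
    intro d hd
    have hm : (m : K) + 2 ≠ 0 := by exact_mod_cast (by omega : m + 2 ≠ 0)
    push_cast at hd ih₁
    refine mul_left_cancel₀ hm ?_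
    rw [hH.coeff, remainderCoeff_add_two, ih₀ d (by omega), ih₁ d (by omega),
      ih₁ (d - 1) (by omega)]

theorem coeff_T_mul_sub_pred {H : ℕ → R[T;T⁻¹]} {k : ℕ} (hk : 1 ≤ k)
    (hH : ∀ m : ℕ, ∀ d : ℤ, m - ((2 * k : ℕ) : ℤ) ≤ d → (H m).coeff d = remainderCoeff m d) :
    (∀ j : ℤ, 1 ≤ j → (T k * (H k - H (k - 1))).coeff j = 0) ∧
      (T k * (H k - H (k - 1))).coeff 0 = -((k - 1).factorial : R) := by
  have hcoeff (j : ℤ) (hj : 0 ≤ j) : (T k * (H k - H (k - 1))).coeff j =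
      remainderCoeff k (j - k) - remainderCoeff (k - 1) (j - k) := by
    rw [coeff_T_mul, AddMonoidAlgebra.coeff_sub, Finsupp.sub_apply, hH k _ (by omega),
      hH (k - 1) _ (by omega)]
  refine ⟨fun j hj => ?_, ?_⟩
  · rw [hcoeff j (by omega), remainderCoeff_of_lt (by omega), remainderCoeff_of_lt (by omega),
      sub_zero]
  · rw [hcoeff 0 le_rfl, remainderCoeff_of_lt (by omega), zero_sub,
      show (0 : ℤ) - k = -((k - 1 : ℕ) + 1 : ℤ) by omega, remainderCoeff_neg_self]
end

/-- With `r, s` as in the paper, the Laurent polynomial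
`-k x^k (rₖ - r_{k-1}) - k x^k (sₖ - s_{k-1}) ∑_{l=1}^{2k} (-1)^{l-1}(l-1)! x^{-l}`
is congruent to `k!` modulo `x⁻¹ℚ[x⁻¹]`: all its coefficients in degrees `≥ 1`
vanish and its constant coefficient equals `k!`. -/
theorem congruence_4_2
    (r s : ℕ → Polynomial ℚ)
    (hr0 : r 0 = 0) (hr1 : r 1 = -1) (hs0 : s 0 = 1) (hs1 : s 1 = 1 + X)
    (hr : ∀ k : ℕ, 2 ≤ k →
      r k = Polynomial.C (1 / (k : ℚ)) * (Polynomial.C (2 * (k : ℚ) - 1) + X) * r (k - 1)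
              - Polynomial.C (((k : ℚ) - 1) / (k : ℚ)) * r (k - 2))
    (hs : ∀ k : ℕ, 2 ≤ k →
      s k = Polynomial.C (1 / (k : ℚ)) * (Polynomial.C (2 * (k : ℚ) - 1) + X) * s (k - 1)
              - Polynomial.C (((k : ℚ) - 1) / (k : ℚ)) * s (k - 2)) :
    ∀ k : ℕ, 1 ≤ k →
      letI E : LaurentPolynomial ℚ :=
        -(k : LaurentPolynomial ℚ) * toLaurent (r k - r (k - 1)) * T (k : ℤ)
          - (k : LaurentPolynomial ℚ) * toLaurent (s k - s (k - 1)) * T (k : ℤ)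
            * ∑ l ∈ Finset.Icc 1 (2 * k),
                LaurentPolynomial.C ((-1 : ℚ) ^ (l - 1) * ((l - 1).factorial : ℚ))
                  * T (-(l : ℤ))
      (∀ j : ℤ, 1 ≤ j → E.coeff j = 0) ∧ E.coeff 0 = (k.factorial : ℚ) := by
  intro k hk
  rw [← eulerSeries.eq_1]
  set f := eulerSeries ℚ (2 * k)
  set H : ℕ → ℚ[T;T⁻¹] := fun m => toLaurent (r m) + toLaurent (s m) * f
  have hH : LaguerreRec (T 1) H := by
    simpa only [toLaurent_X] using ((laguerreRec_of_eq r hr).map toLaurent).add_mul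
      ((laguerreRec_of_eq s hs).map toLaurent) f
  have hcoeff := coeff_eq_remainderCoeff hH
    (fun d hd => by
      simp only [H, hr0, hs0, map_zero, map_one, zero_add, one_mul]
      exact coeff_eulerSeries hd)
    (fun d hd => by
      simp only [H, hr1, hs1, map_neg, map_one, map_add, toLaurent_X]
      exact coeff_neg_one_add_one_add_T_mul (fun d => coeff_eulerSeries) hd)
  obtain ⟨hpos, hzero⟩ := coeff_T_mul_sub_pred hk hcoeff
  have hE : ∀ p q : ℚ[T;T⁻¹], -(k : ℚ[T;T⁻¹]) * p * T k - (k : ℚ[T;T⁻¹]) * q * T k * f =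
      LaurentPolynomial.C (-(k : ℚ)) * (T k * (p + q * f)) := fun p q => by
    rw [map_neg, map_natCast]; ring
  have hdiff : toLaurent (r k - r (k - 1)) + toLaurent (s k - s (k - 1)) * f = H k - H (k - 1) := by
    simp only [H, map_sub]; ring
  simp only [hE, hdiff, LaurentPolynomial.coeff_C_mul]
  refine ⟨fun j hj => by rw [hpos j hj, mul_zero], ?_⟩
  rw [hzero, ← Nat.mul_factorial_pred (by omega : k ≠ 0)]
  push_cast
  ring
end

section
/- Let c_n = (−1)^n n! for n ≥ 0, and define doubly indexed sequences by e₀^{(n)} = 0, q₀^{(n)} = c_{n+1}/c_n, e_{k+1}^{(n)} = q_k^{(n+1)} − q_k^{(n)} + e_k^{(n+1)}, and q_{k+1}^{(n)} = (e_{k+1}^{(n+1)}/e_{k+1}^{(n)}) · q_k^{(n+1)} for n, k ≥ 0. Then for all integers n ≥ 0 and k ≥ 1, q_{k−1}^{(n)} = −(n+k) and e_k^{(n)} = −k. -/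
/-- The quotient-difference algorithm applied to `cₙ = (-1)^n n!`:
with `e₀^{(n)} = 0`, `q₀^{(n)} = c_{n+1}/cₙ`, `e_{k+1}^{(n)} = q_k^{(n+1)} - q_k^{(n)} + e_k^{(n+1)}`,
`q_{k+1}^{(n)} = (e_{k+1}^{(n+1)}/e_{k+1}^{(n)}) q_k^{(n+1)}`, one has
`q_{k-1}^{(n)} = -(n+k)` and `e_k^{(n)} = -k` for all `n ≥ 0`, `k ≥ 1`.
(Here `e k n` denotes `e_k^{(n)}` and `q k n` denotes `q_k^{(n)}`.) -/
theorem qd_algorithm_for_factorials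
    (c : ℕ → ℚ) (hc : ∀ n, c n = (-1 : ℚ) ^ n * (n.factorial : ℚ))
    (e q : ℕ → ℕ → ℚ)
    (he0 : ∀ n, e 0 n = 0)
    (hq0 : ∀ n, q 0 n = c (n + 1) / c n)
    (he : ∀ k n, e (k + 1) n = q k (n + 1) - q k n + e k (n + 1))
    (hq : ∀ k n, q (k + 1) n = (e (k + 1) (n + 1) / e (k + 1) n) * q k (n + 1)) :
    ∀ n k : ℕ, 1 ≤ k → q (k - 1) n = -((n : ℚ) + (k : ℚ)) ∧ e k n = -(k : ℚ) := by
  have hq0' : ∀ n : ℕ, q 0 n = -((n : ℚ) + 1) := by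
    intro n
    have hne : ((n.factorial : ℚ)) ≠ 0 := by
      exact_mod_cast Nat.factorial_ne_zero n
    rw [hq0, hc, hc, Nat.factorial_succ, pow_succ]
    push_cast
    field_simp
  have key : ∀ k n : ℕ, q k n = -((n : ℚ) + k + 1) ∧ e (k + 1) n = -((k : ℚ) + 1) := by
    intro k
    induction k with
    | zero =>
      intro n
      constructor
      · simpa using hq0' n
      · rw [he, he0, hq0' n, hq0' (n + 1)]
        push_cast; ring
    | succ k ih =>
      intro n
      have h2 := (ih (n + 1)).1
      have h3 := (ih n).2
      have h4 := (ih (n + 1)).2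
      have hne : -((k : ℚ) + 1) ≠ 0 := by
        intro h
        have : ((k : ℚ) + 1) > 0 := by positivity
        linarith [neg_eq_zero.mp h]
      have hqgen : ∀ m : ℕ, q (k + 1) m = -((m : ℚ) + (k + 1) + 1) := by
        intro m
        rw [hq, (ih (m + 1)).1, (ih m).2, (ih (m + 1)).2, div_self hne, one_mul]
        push_cast; ring
      constructor
      · rw [hqgen n]; push_cast; ring
      · rw [he, hqgen n, hqgen (n + 1), h4]
        push_cast; ring
  intro n k hk
  rcases k with _ | m
  · omega
  · simp only [Nat.add_sub_cancel]
    have h1 := (key m n).1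
    have h2 := (key m n).2
    refine ⟨by rw [h1]; push_cast; ring, by rw [h2]; push_cast; ring⟩
end
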